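/- arXiv:1909.04359 — 9 statements merged into one kernel-verified Lean document; each statement's English description precedes it below -/
import Mathlib

section
/- Let E be a finite set, let 𝒜 = (A_j)_{j ∈ J} be a finite family of subsets of E, let B be a partial transversal of 𝒜 of maximum cardinality, and let φ : B → J be an injective map such that b ∈ A_{φ(b)} for every b ∈ B. Then the subfamily (A_j)_{j ∈ φ(B)} has exactly the same partial transversals as 𝒜 (i.e., it presents the same transversal matroid). -/
/-- `S` is a partial transversal of the family `A : ι → Set α`: there is an injective map
`f : S → ι` with `s ∈ A (f s)` for all `s ∈ S`. -/
def IsPartialTransversal {α ι : Type*} (A : ι → Set α) (S : Finset α) : Prop :=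
  ∃ f : S → ι, Function.Injective f ∧ ∀ s : S, (s : α) ∈ A (f s)

/-- A total-function version of `IsPartialTransversal`. -/
lemma isPartialTransversal_of_total {α ι : Type*} (A : ι → Set α) (S : Finset α)
    (f : α → ι) (hf : Set.InjOn f S) (hmem : ∀ s ∈ S, s ∈ A (f s)) :
    IsPartialTransversal A S := by
  refine ⟨fun s => f s, ?_, fun s => hmem s s.2⟩
  intro a b hab
  exact Subtype.ext (hf a.2 b.2 hab)

/-- If `B` is a maximum-cardinality partial transversal of a finite family `A` of subsets of a
finite set, and `φ : B → ι` is injective with `b ∈ A (φ b)` for all `b`, then the subfamily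
indexed by the range of `φ` has exactly the same partial transversals as `A`. -/
theorem subfamily_of_max_transversal_same_partial_transversals
    {α ι : Type*} [Fintype α] [Fintype ι] (A : ι → Set α) (B : Finset α)
    (hB : IsPartialTransversal A B)
    (hmax : ∀ S : Finset α, IsPartialTransversal A S → S.card ≤ B.card)
    (φ : B → ι) (hinj : Function.Injective φ)
    (hmem : ∀ b : B, (b : α) ∈ A (φ b)) :
    ∀ S : Finset α,
      IsPartialTransversal (fun j : Set.range φ => A (j : ι)) S ↔
        IsPartialTransversal A S := by
  classical
  rcases isEmpty_or_nonempty ι with hι | hι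
  · intro S
    constructor
    · rintro ⟨f, -, -⟩
      exact ⟨fun s => isEmptyElim ((f s : ι)), fun s => isEmptyElim ((f s : ι)),
        fun s => isEmptyElim ((f s : ι))⟩
    · rintro ⟨f, -, -⟩
      exact ⟨fun s => isEmptyElim (f s), fun s => isEmptyElim (f s),
        fun s => isEmptyElim (f s)⟩
  · inhabit ι
    set J' : Set ι := Set.range φ with hJ'
    -- a total version of `φ`
    set ψ : α → ι := fun b => if hb : b ∈ B then φ ⟨b, hb⟩ else default with hψ
    have hψeq : ∀ b (hb : b ∈ B), ψ b = φ ⟨b, hb⟩ := by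
      intro b hb; simp [hψ, hb]
    have hψmem : ∀ b ∈ B, b ∈ A (ψ b) := by
      intro b hb; rw [hψeq b hb]; exact hmem ⟨b, hb⟩
    have hψJ' : ∀ b ∈ B, ψ b ∈ J' := by
      intro b hb; rw [hψeq b hb]; exact ⟨⟨b, hb⟩, rfl⟩
    have hψinj : Set.InjOn ψ B := by
      intro a ha b hb hab
      rw [hψeq a ha, hψeq b hb] at hab
      exact congrArg Subtype.val (hinj hab)
    have hJ'B : ∀ j ∈ J', ∃ b ∈ B, ψ b = j := by
      rintro j ⟨b, rfl⟩
      exact ⟨b, b.2, hψeq b b.2⟩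
    -- Key lemma: any partial transversal can be re-matched using only indices in `J'`.
    have key : ∀ n : ℕ, ∀ S : Finset α, ∀ f : α → ι, Set.InjOn f S →
        (∀ s ∈ S, s ∈ A (f s)) → (S.filter (fun s => f s ∉ J')).card ≤ n →
        ∃ g : α → ι, Set.InjOn g S ∧ (∀ s ∈ S, s ∈ A (g s)) ∧ ∀ s ∈ S, g s ∈ J' := by
      intro n
      induction n with
      | zero =>
        intro S f hf hfA hcard
        refine ⟨f, hf, hfA, fun s hs => ?_⟩
        by_contra hsn
        have : s ∈ S.filter (fun s => f s ∉ J') := Finset.mem_filter.2 ⟨hs, hsn⟩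
        have := Finset.card_pos.2 ⟨s, this⟩
        omega
      | succ n IH =>
        intro S f hf hfA hcard
        by_cases hfe : (S.filter (fun s => f s ∉ J')) = ∅
        · refine ⟨f, hf, hfA, fun s hs => ?_⟩
          by_contra hsn
          have h : s ∈ S.filter (fun s => f s ∉ J') := Finset.mem_filter.2 ⟨hs, hsn⟩
          rw [hfe] at h
          exact absurd h (Finset.notMem_empty s)
        · obtain ⟨s1, hs1⟩ := Finset.nonempty_of_ne_empty hfe
          rw [Finset.mem_filter] at hs1
          obtain ⟨hs1S, hs1J⟩ := hs1
          haveI : Nonempty α := ⟨s1⟩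
          -- the alternating path
          let c : ℕ → α := fun k => Nat.rec s1 (fun _ prev => Function.invFunOn f S (ψ prev)) k
          have hc0 : c 0 = s1 := rfl
          have hcs : ∀ k, c (k + 1) = Function.invFunOn f S (ψ (c k)) := fun k => rfl
          -- `good k` : the path is valid up to step `k`
          set good : ℕ → Prop := fun k => ∀ i < k, c i ∈ B ∧ ψ (c i) ∈ f '' (S : Set α)
            with hgood
          have good_mono : ∀ {k l}, k ≤ l → good l → good k := by
            intro k l hkl hl i hi
            exact hl i (lt_of_lt_of_le hi hkl)
          have hcS : ∀ k, good k → c k ∈ S := by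
            intro k
            cases k with
            | zero => intro _; exact hs1S
            | succ k =>
              intro hg
              obtain ⟨-, hmemim⟩ := hg k (Nat.lt_succ_self k)
              rw [hcs k]
              obtain ⟨a, ha, hfa⟩ := hmemim
              exact Function.invFunOn_mem ⟨a, ha, hfa⟩
          have hfc : ∀ k, good (k + 1) → f (c (k + 1)) = ψ (c k) := by
            intro k hg
            obtain ⟨-, hmemim⟩ := hg k (Nat.lt_succ_self k)
            obtain ⟨a, ha, hfa⟩ := hmemim
            rw [hcs k]
            exact Function.invFunOn_eq ⟨a, ha, hfa⟩
          -- distinctness along the path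
          have hdist : ∀ j, good j → ∀ i < j, c i ≠ c j := by
            intro j
            induction j using Nat.strong_induction_on with
            | _ j IHj =>
              intro hgj i hij hceq
              cases j with
              | zero => omega
              | succ j =>
                have hfcj : f (c (j + 1)) = ψ (c j) := hfc j hgj
                have hcjB : c j ∈ B := (hgj j (Nat.lt_succ_self j)).1
                cases i with
                | zero =>
                  apply hs1J
                  have hfs1 : f s1 = ψ (c j) := by rw [← hc0, hceq]; exact hfcj
                  rw [hfs1]
                  exact hψJ' _ hcjB
                | succ i =>
                  have hgi : good (i + 1) := good_mono (by omega) hgj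
                  have hfci : f (c (i + 1)) = ψ (c i) := hfc i hgi
                  have : ψ (c i) = ψ (c j) := by
                    rw [← hfci, ← hfcj, hceq]
                  have hciB : c i ∈ B := (hgj i (by omega)).1
                  have hcij : c i = c j := hψinj hciB hcjB this
                  exact IHj j (Nat.lt_succ_self j) (good_mono (Nat.le_succ j) hgj)
                    i (by omega) hcij
          -- there is a step where the path terminates
          have hterm : ∃ k, ¬(c k ∈ B ∧ ψ (c k) ∈ f '' (S : Set α)) := by
            by_contra hall
            push_neg at hall
            have hgall : ∀ k, good k := by
              intro k i _
              exact hall i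
            have hcinj : Function.Injective c := by
              intro i j hij
              rcases lt_trichotomy i j with h | h | h
              · exact absurd hij (hdist j (hgall j) i h)
              · exact h
              · exact absurd hij.symm (hdist i (hgall i) j h)
            obtain ⟨i, j, hij, hc⟩ := Finite.exists_ne_map_eq_of_infinite c
            exact hij (hcinj hc)
          haveI : DecidablePred fun k => ¬(c k ∈ B ∧ ψ (c k) ∈ f '' (S : Set α)) :=
            Classical.decPred _
          set K := Nat.find hterm with hK
          have hKspec := Nat.find_spec hterm
          have hgoodK : good K := by
            intro i hi
            rw [hK] at hi
            exact not_not.mp (Nat.find_min hterm hi)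
          have hcKS : c K ∈ S := hcS K hgoodK
          -- the path as a finset
          set P : Finset α := (Finset.range (K + 1)).image c with hP
          have hmemP : ∀ x, x ∈ P ↔ ∃ i ≤ K, c i = x := by
            intro x
            simp [hP, Nat.lt_succ_iff]
          have hPS : ∀ x ∈ P, x ∈ S := by
            intro x hx
            obtain ⟨i, hi, rfl⟩ := (hmemP x).1 hx
            exact hcS i (good_mono hi hgoodK)
          rcases Classical.em (c K ∈ B) with hcKB | hcKB
          · -- Case B: the path ends at an index not used by `f`; switch along the path.
            have hψKnot : ψ (c K) ∉ f '' (S : Set α) := by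
              intro h
              exact hKspec ⟨hcKB, h⟩
            have hPB : ∀ x ∈ P, x ∈ B := by
              intro x hx
              obtain ⟨i, hi, rfl⟩ := (hmemP x).1 hx
              rcases eq_or_lt_of_le hi with h | h
              · rwa [h]
              · exact (hgoodK i h).1
            set f' : α → ι := fun x => if x ∈ P then ψ x else f x with hf'
            have hf'A : ∀ s ∈ S, s ∈ A (f' s) := by
              intro s hs
              by_cases hsP : s ∈ P
              · simp only [hf', if_pos hsP]
                exact hψmem s (hPB s hsP)
              · simp only [hf', if_neg hsP]
                exact hfA s hs
            have hf'inj : Set.InjOn f' S := by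
              intro x hx y hy hxy
              by_cases hxP : x ∈ P <;> by_cases hyP : y ∈ P
              · simp only [hf', if_pos hxP, if_pos hyP] at hxy
                exact hψinj (hPB x hxP) (hPB y hyP) hxy
              · -- x on path, y off path
                exfalso
                simp only [hf', if_pos hxP, if_neg hyP] at hxy
                obtain ⟨i, hi, rfl⟩ := (hmemP x).1 hxP
                rcases eq_or_lt_of_le hi with h | h
                · subst h
                  exact hψKnot ⟨y, hy, hxy.symm⟩
                · have : f (c (i + 1)) = ψ (c i) := hfc i (good_mono h hgoodK)
                  have hy' : y = c (i + 1) :=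
                    hf hy (hcS (i + 1) (good_mono h hgoodK)) (by rw [hxy.symm, this])
                  exact hyP ((hmemP y).2 ⟨i + 1, by omega, hy'.symm⟩)
              · exfalso
                simp only [hf', if_neg hxP, if_pos hyP] at hxy
                obtain ⟨i, hi, rfl⟩ := (hmemP y).1 hyP
                rcases eq_or_lt_of_le hi with h | h
                · subst h
                  exact hψKnot ⟨x, hx, hxy⟩
                · have : f (c (i + 1)) = ψ (c i) := hfc i (good_mono h hgoodK)
                  have hx' : x = c (i + 1) :=
                    hf hx (hcS (i + 1) (good_mono h hgoodK)) (by rw [hxy, this])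
                  exact hxP ((hmemP x).2 ⟨i + 1, by omega, hx'.symm⟩)
              · simp only [hf', if_neg hxP, if_neg hyP] at hxy
                exact hf hx hy hxy
            have hsub : S.filter (fun s => f' s ∉ J') ⊆
                (S.filter (fun s => f s ∉ J')).erase s1 := by
              intro s hsf
              rw [Finset.mem_filter] at hsf
              obtain ⟨hsS, hsJ⟩ := hsf
              have hsP : s ∉ P := by
                intro hsP
                apply hsJ
                simp only [hf', if_pos hsP]
                exact hψJ' s (hPB s hsP)
              refine Finset.mem_erase.2 ⟨?_, Finset.mem_filter.2 ⟨hsS, ?_⟩⟩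
              · intro h
                exact hsP (h ▸ (hmemP s1).2 ⟨0, Nat.zero_le K, hc0⟩)
              · simpa only [hf', if_neg hsP] using hsJ
            have hcard' : (S.filter (fun s => f' s ∉ J')).card ≤ n := by
              have h1 : s1 ∈ S.filter (fun s => f s ∉ J') :=
                Finset.mem_filter.2 ⟨hs1S, hs1J⟩
              have := Finset.card_le_card hsub
              rw [Finset.card_erase_of_mem h1] at this
              omega
            exact IH S f' hf'inj hf'A hcard'
          · -- Case A: the path ends at an element not in `B`; this would augment `B`,
            -- contradicting maximality.
            exfalso
            have hPB' : ∀ i < K, c i ∈ B := fun i hi => (hgoodK i hi).1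
            set g : α → ι := fun x => if x ∈ P then f x else ψ x with hg
            set S' : Finset α := insert (c K) B with hS'
            have hgA : ∀ s ∈ S', s ∈ A (g s) := by
              intro s hs
              by_cases hsP : s ∈ P
              · simp only [hg, if_pos hsP]
                exact hfA s (hPS s hsP)
              · simp only [hg, if_neg hsP]
                have hsB : s ∈ B := by
                  rcases Finset.mem_insert.1 hs with h | h
                  · exact absurd (h ▸ (hmemP (c K)).2 ⟨K, le_refl K, rfl⟩) hsP
                  · exact h
                exact hψmem s hsB
            have hginj : Set.InjOn g S' := by
              intro x hx y hy hxy
              have hxB : x ∉ P → x ∈ B := by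
                intro hxP
                rcases Finset.mem_insert.1 hx with h | h
                · exact absurd (h ▸ (hmemP (c K)).2 ⟨K, le_refl K, rfl⟩) hxP
                · exact h
              have hyB : y ∉ P → y ∈ B := by
                intro hyP
                rcases Finset.mem_insert.1 hy with h | h
                · exact absurd (h ▸ (hmemP (c K)).2 ⟨K, le_refl K, rfl⟩) hyP
                · exact h
              by_cases hxP : x ∈ P <;> by_cases hyP : y ∈ P
              · simp only [hg, if_pos hxP, if_pos hyP] at hxy
                exact hf (hPS x hxP) (hPS y hyP) hxy
              · exfalso
                simp only [hg, if_pos hxP, if_neg hyP] at hxy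
                obtain ⟨i, hi, rfl⟩ := (hmemP x).1 hxP
                have hyB' := hyB hyP
                cases i with
                | zero =>
                  rw [hc0] at hxy
                  exact hs1J (hxy ▸ hψJ' y hyB')
                | succ i =>
                  have hgi : good (i + 1) := good_mono hi hgoodK
                  have : f (c (i + 1)) = ψ (c i) := hfc i hgi
                  rw [this] at hxy
                  have : c i = y := hψinj (hgi i (Nat.lt_succ_self i)).1 hyB' hxy
                  exact hyP ((hmemP y).2 ⟨i, by omega, this⟩)
              · exfalso
                simp only [hg, if_neg hxP, if_pos hyP] at hxy
                obtain ⟨i, hi, rfl⟩ := (hmemP y).1 hyP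
                have hxB' := hxB hxP
                cases i with
                | zero =>
                  rw [hc0] at hxy
                  exact hs1J (hxy ▸ hψJ' x hxB')
                | succ i =>
                  have hgi : good (i + 1) := good_mono hi hgoodK
                  have : f (c (i + 1)) = ψ (c i) := hfc i hgi
                  rw [this] at hxy
                  have : c i = x := hψinj (hgi i (Nat.lt_succ_self i)).1 hxB' hxy.symm
                  exact hxP ((hmemP x).2 ⟨i, by omega, this⟩)
              · simp only [hg, if_neg hxP, if_neg hyP] at hxy
                exact hψinj (hxB hxP) (hyB hyP) hxy
            have hS'card : S'.card = B.card + 1 :=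
              Finset.card_insert_of_notMem hcKB
            have := hmax S' (isPartialTransversal_of_total A S' g hginj hgA)
            omega
    -- assemble the two directions
    intro S
    constructor
    · rintro ⟨f, hfinj, hfmem⟩
      refine ⟨fun s => (f s : ι), ?_, hfmem⟩
      intro a b hab
      exact hfinj (Subtype.ext hab)
    · rintro ⟨f0, hf0inj, hf0mem⟩
      set f : α → ι := fun x => if hx : x ∈ S then f0 ⟨x, hx⟩ else default with hf
      have hfinj : Set.InjOn f S := by
        intro a ha b hb hab
        have ha' : a ∈ S := ha
        have hb' : b ∈ S := hb
        simp only [hf, dif_pos ha', dif_pos hb'] at hab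
        exact congrArg Subtype.val (hf0inj hab)
      have hfA : ∀ s ∈ S, s ∈ A (f s) := by
        intro s hs
        simp only [hf, dif_pos hs]
        exact hf0mem ⟨s, hs⟩
      obtain ⟨g, hginj, hgA, hgJ⟩ := key (S.filter (fun s => f s ∉ J')).card S f hfinj hfA
        (le_refl _)
      refine ⟨fun s => ⟨g s, hgJ s s.2⟩, ?_, fun s => hgA s s.2⟩
      intro a b hab
      have : g a = g b := congrArg Subtype.val hab
      exact Subtype.ext (hginj a.2 b.2 this)
end

section
/- Let E be a finite set and let 𝒜 = (A_j)_{j ∈ J} be a finite family of subsets of E whose rank (maximum cardinality of a partial transversal) is r. Then there exists a subset J' ⊆ J with |J'| = r such that the subfamily (A_j)_{j ∈ J'} has exactly the same partial transversals as 𝒜. In other words, every transversal matroid of rank r has an r-presentation. -/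
/-- If a finite family `A` of subsets of a finite set has rank `r` (maximum cardinality of a
partial transversal), then there is a subset `J'` of the index set with `|J'| = r` such that the
subfamily indexed by `J'` has exactly the same partial transversals as `A`:
every transversal matroid of rank `r` has an `r`-presentation. -/
theorem exists_r_presentation
    {α ι : Type*} [Fintype α] [Fintype ι] (A : ι → Set α) (r : ℕ)
    (hex : ∃ B : Finset α, IsPartialTransversal A B ∧ B.card = r)
    (hub : ∀ S : Finset α, IsPartialTransversal A S → S.card ≤ r) :
    ∃ J' : Finset ι, J'.card = r ∧
      ∀ S : Finset α,
        IsPartialTransversal (fun j : J' => A (j : ι)) S ↔ IsPartialTransversal A S := by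
  classical
  obtain ⟨B, ⟨f, hf_inj, hf_mem⟩, hBcard⟩ := hex
  set J' : Finset ι := B.attach.image f with hJ'def
  have hJ'card : J'.card = r := by
    rw [hJ'def, Finset.card_image_of_injective _ hf_inj, Finset.card_attach, hBcard]
  refine ⟨J', hJ'card, fun S => ⟨?_, ?_⟩⟩
  · rintro ⟨g, hg_inj, hg_mem⟩
    exact ⟨fun s => (g s : ι), fun a b h => hg_inj (Subtype.val_injective h), hg_mem⟩
  · rintro ⟨g, hg_inj, hg_mem⟩
    -- Hall condition for matching `S` into `J'`.
    set t : ↥S → Finset ι := fun s => J'.filter (fun j => (s : α) ∈ A j) with ht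
    have hall : ∀ T : Finset ↥S, T.card ≤ (T.biUnion t).card := by
      intro T
      by_contra hlt
      push_neg at hlt
      set K : Finset ι := T.biUnion t with hK
      -- T is nonempty
      have hTne : T.Nonempty := by
        rw [← Finset.card_pos]; omega
      obtain ⟨s₀, hs₀⟩ := hTne
      -- auxiliary functions
      set Fx : α → ι := fun x => if hb : x ∈ B then f ⟨x, hb⟩ else g s₀ with hFx
      set H : α → ι := fun x =>
        if hx : x ∈ S then (if (⟨x, hx⟩ : ↥S) ∈ T then g ⟨x, hx⟩ else Fx x) else Fx x with hH
      have hH1 : ∀ (x : α) (hx : x ∈ S), (⟨x, hx⟩ : ↥S) ∈ T → H x = g ⟨x, hx⟩ := by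
        intro x hx hxT
        rw [hH]
        simp only [dif_pos hx, if_pos hxT]
      have hH2 : ∀ x : α, ¬(∃ hx : x ∈ S, (⟨x, hx⟩ : ↥S) ∈ T) → H x = Fx x := by
        intro x hx
        rw [hH]
        by_cases h : x ∈ S
        · simp only [dif_pos h, if_neg (fun ht' => hx ⟨h, ht'⟩)]
        · simp only [dif_neg h]
      -- g-values of elements of T are in K
      have hgK : ∀ s : ↥S, s ∈ T → g s ∈ J' → g s ∈ K := by
        intro s hsT hsJ'
        rw [hK]
        exact Finset.mem_biUnion.mpr ⟨s, hsT, Finset.mem_filter.mpr ⟨hsJ', hg_mem s⟩⟩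
      -- the enlarged set
      set B₀ : Finset ↥B := B.attach.filter (fun b => f b ∉ K) with hB₀
      set C : Finset α := B₀.image Subtype.val ∪ T.image Subtype.val with hC
      -- key dichotomy for elements of C
      have hCd : ∀ x ∈ C, (∃ hx : x ∈ S, (⟨x, hx⟩ : ↥S) ∈ T) ∨
          (¬(∃ hx : x ∈ S, (⟨x, hx⟩ : ↥S) ∈ T) ∧ ∃ hb : x ∈ B, (⟨x, hb⟩ : ↥B) ∈ B₀) := by
        intro x hx
        by_cases hP : ∃ hx : x ∈ S, (⟨x, hx⟩ : ↥S) ∈ T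
        · exact Or.inl hP
        · refine Or.inr ⟨hP, ?_⟩
          rw [hC] at hx
          rcases Finset.mem_union.mp hx with h | h
          · obtain ⟨b, hb, hbx⟩ := Finset.mem_image.mp h
            exact ⟨hbx ▸ b.2, by rwa [show (⟨x, hbx ▸ b.2⟩ : ↥B) = b from Subtype.ext hbx.symm]⟩
          · obtain ⟨s, hs, hsx⟩ := Finset.mem_image.mp h
            exact absurd ⟨hsx ▸ s.2, by
              rwa [show (⟨x, hsx ▸ s.2⟩ : ↥S) = s from Subtype.ext hsx.symm]⟩ hP
      -- C is a partial transversal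
      have hCtrans : IsPartialTransversal A C := by
        refine ⟨fun c => H (c : α), ?_, ?_⟩
        · intro c₁ c₂ hEq
          dsimp only at hEq
          rcases hCd c₁ c₁.2 with ⟨hx₁, hT₁⟩ | ⟨hP₁, hb₁, hB₁⟩ <;>
            rcases hCd c₂ c₂.2 with ⟨hx₂, hT₂⟩ | ⟨hP₂, hb₂, hB₂⟩
          · rw [hH1 _ hx₁ hT₁, hH1 _ hx₂ hT₂] at hEq
            have h' : (⟨(c₁ : α), hx₁⟩ : ↥S) = ⟨(c₂ : α), hx₂⟩ := hg_inj hEq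
            have h'' : (c₁ : α) = (c₂ : α) := by injection h'
            exact Subtype.ext h''
          · exfalso
            rw [hH1 _ hx₁ hT₁, hH2 _ hP₂] at hEq
            have hfb₂ : Fx (c₂ : α) = f ⟨(c₂ : α), hb₂⟩ := by rw [hFx]; simp [hb₂]
            rw [hfb₂] at hEq
            have hmemJ' : f ⟨(c₂ : α), hb₂⟩ ∈ J' := by
              rw [hJ'def]; exact Finset.mem_image.mpr ⟨⟨(c₂ : α), hb₂⟩, Finset.mem_attach _ _, rfl⟩
            have hnotK : f ⟨(c₂ : α), hb₂⟩ ∉ K := (Finset.mem_filter.mp hB₂).2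
            exact hnotK (hEq ▸ hgK ⟨(c₁ : α), hx₁⟩ hT₁ (hEq ▸ hmemJ'))
          · exfalso
            rw [hH1 _ hx₂ hT₂, hH2 _ hP₁] at hEq
            have hfb₁ : Fx (c₁ : α) = f ⟨(c₁ : α), hb₁⟩ := by rw [hFx]; simp [hb₁]
            rw [hfb₁] at hEq
            have hmemJ' : f ⟨(c₁ : α), hb₁⟩ ∈ J' := by
              rw [hJ'def]; exact Finset.mem_image.mpr ⟨⟨(c₁ : α), hb₁⟩, Finset.mem_attach _ _, rfl⟩
            have hnotK : f ⟨(c₁ : α), hb₁⟩ ∉ K := (Finset.mem_filter.mp hB₁).2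
            exact hnotK (hEq.symm ▸ hgK ⟨(c₂ : α), hx₂⟩ hT₂ (hEq.symm ▸ hmemJ'))
          · rw [hH2 _ hP₁, hH2 _ hP₂] at hEq
            have h₁ : Fx (c₁ : α) = f ⟨(c₁ : α), hb₁⟩ := by rw [hFx]; simp [hb₁]
            have h₂ : Fx (c₂ : α) = f ⟨(c₂ : α), hb₂⟩ := by rw [hFx]; simp [hb₂]
            rw [h₁, h₂] at hEq
            have h' : (⟨(c₁ : α), hb₁⟩ : ↥B) = ⟨(c₂ : α), hb₂⟩ := hf_inj hEq
            have h'' : (c₁ : α) = (c₂ : α) := by injection h'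
            exact Subtype.ext h''
        · intro c
          dsimp only
          rcases hCd c c.2 with ⟨hx, hT⟩ | ⟨hP, hb, hB'⟩
          · rw [hH1 _ hx hT]; exact hg_mem _
          · rw [hH2 _ hP]
            have h₁ : Fx (c : α) = f ⟨(c : α), hb⟩ := by rw [hFx]; simp [hb]
            rw [h₁]; exact hf_mem _
      -- cardinality contradiction
      have hCcard : C.card = B₀.card + T.card := by
        rw [hC, Finset.card_union_of_disjoint, Finset.card_image_of_injective _ Subtype.val_injective,
          Finset.card_image_of_injective _ Subtype.val_injective]
        · rw [Finset.disjoint_left]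
          rintro x hx₁ hx₂
          obtain ⟨b, hbB₀, hbx⟩ := Finset.mem_image.mp hx₁
          obtain ⟨s, hsT, hsx⟩ := Finset.mem_image.mp hx₂
          have hnotK : f b ∉ K := (Finset.mem_filter.mp hbB₀).2
          have hmemJ' : f b ∈ J' := by
            rw [hJ'def]
            exact Finset.mem_image.mpr ⟨b, Finset.mem_attach _ _, rfl⟩
          apply hnotK
          rw [hK]
          refine Finset.mem_biUnion.mpr ⟨s, hsT, Finset.mem_filter.mpr ⟨hmemJ', ?_⟩⟩
          rw [hsx, ← hbx]
          exact hf_mem b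
      have hsplit : (B.attach.filter (fun b => f b ∈ K)).card
          + (B.attach.filter (fun b => f b ∉ K)).card = r := by
        have h := Finset.card_filter_add_card_filter_not
          (s := B.attach) (p := fun b => f b ∈ K)
        simpa [Finset.card_attach, hBcard] using h
      have hB₀c : B₀.card = (B.attach.filter (fun b => f b ∉ K)).card := by rw [hB₀]
      have hK2 : (B.attach.filter (fun b => f b ∈ K)).card ≤ K.card := by
        apply Finset.card_le_card_of_injOn f
        · intro b hb'; exact (Finset.mem_filter.mp hb').2
        · exact hf_inj.injOn
      have := hub C hCtrans
      omega
    -- apply Hall's theorem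
    obtain ⟨f₀, hf₀inj, hf₀mem⟩ := (Finset.all_card_le_biUnion_card_iff_exists_injective t).mp hall
    refine ⟨fun s => ⟨f₀ s, (Finset.mem_filter.mp (hf₀mem s)).1⟩, ?_, ?_⟩
    · intro a b h
      exact hf₀inj (congrArg Subtype.val h)
    · intro s
      exact (Finset.mem_filter.mp (hf₀mem s)).2
end

section
/- Let E be a finite set and let 𝒜 = (A_j)_{j ∈ J} be a finite family of subsets of E of rank r such that no element of E belongs to every maximum-cardinality partial transversal of 𝒜 (i.e., the transversal matroid M[𝒜] has no coloops). Then every finite family ℬ = (B_k)_{k ∈ K} of subsets of E having exactly the same partial transversals as 𝒜 has exactly r nonempty members. -/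
/-- If a finite family `A` of subsets of a finite set has rank `r` and no element belongs to
every maximum-cardinality partial transversal (no coloops), then every finite family with the
same partial transversals has exactly `r` nonempty members. -/
theorem card_nonempty_members_of_presentation_eq_rank
    {α ι κ : Type*} [Fintype α] [Fintype ι] [Fintype κ]
    (A : ι → Set α) (r : ℕ)
    (hex : ∃ B : Finset α, IsPartialTransversal A B ∧ B.card = r)
    (hub : ∀ S : Finset α, IsPartialTransversal A S → S.card ≤ r)
    (hnocoloop : ∀ e : α, ∃ S : Finset α,
      IsPartialTransversal A S ∧ S.card = r ∧ e ∉ S)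
    (B : κ → Set α)
    (hsame : ∀ S : Finset α, IsPartialTransversal B S ↔ IsPartialTransversal A S) :
    {k : κ | B k ≠ ∅}.ncard = r := by
  classical
  set K : Finset κ := Finset.univ.filter (fun k => B k ≠ ∅) with hKdef
  have hncard : {k : κ | B k ≠ ∅}.ncard = K.card := by
    rw [Set.ncard_eq_toFinset_card']
    congr 1
    ext k
    simp [hKdef]
  rw [hncard]
  -- lower bound
  obtain ⟨S₀, hS₀A, hS₀card⟩ := hex
  obtain ⟨f₀, hf₀inj, hf₀mem⟩ := (hsame S₀).mpr hS₀A
  have hrK : r ≤ K.card := by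
    have hsub : (Finset.univ : Finset ↥S₀).image (fun s => f₀ s) ⊆ K := by
      intro k hk
      obtain ⟨s, _, rfl⟩ := Finset.mem_image.mp hk
      simp only [hKdef, Finset.mem_filter, Finset.mem_univ, true_and]
      exact Set.nonempty_iff_ne_empty.mp ⟨s, hf₀mem s⟩
    calc r = S₀.card := hS₀card.symm
    _ = (Finset.univ : Finset ↥S₀).card := by simp
    _ = ((Finset.univ : Finset ↥S₀).image (fun s => f₀ s)).card :=
        (Finset.card_image_of_injective _ hf₀inj).symm
    _ ≤ K.card := Finset.card_le_card hsub
  -- upper bound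
  have hKr : K.card ≤ r := by
    by_contra hlt
    push_neg at hlt
    set d : ℕ := K.card - r with hd
    have hd1 : 1 ≤ d := by omega
    have hαne : Nonempty α := by
      obtain ⟨k, hk⟩ := Finset.card_pos.mp (show 0 < K.card by omega)
      have : B k ≠ ∅ := by simpa [hKdef] using hk
      obtain ⟨a, _⟩ := Set.nonempty_iff_ne_empty.mpr this
      exact ⟨a⟩
    have : Inhabited α := Classical.inhabited_of_nonempty hαne
    set t : ↥K → Finset (α ⊕ Fin (d - 1)) :=
      fun k => ((B k.1).toFinset).disjSum Finset.univ with htdef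
    -- Hall fails for t
    have hnoSDR : ¬ ∃ f : ↥K → α ⊕ Fin (d - 1),
        Function.Injective f ∧ ∀ x, f x ∈ t x := by
      rintro ⟨f, hfinj, hfmem⟩
      set P : Finset ↥K := Finset.univ.filter (fun k => (f k).isLeft) with hPdef
      set Pc : Finset ↥K := Finset.univ.filter (fun k => ¬ (f k).isLeft) with hPcdef
      have hsplit : P.card + Pc.card = K.card := by
        rw [hPdef, hPcdef, Finset.card_filter_add_card_filter_not]
        simp
      have hPc : Pc.card ≤ d - 1 := by
        have := Finset.card_le_card_of_injOn (fun k => f k)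
          (s := Pc)
          (t := (Finset.univ : Finset (Fin (d-1))).map ⟨Sum.inr, Sum.inr_injective⟩)
          (by
            intro k hk
            have hk' : ¬ (f k).isLeft := (Finset.mem_filter.mp hk).2
            cases h : f k with
            | inl a => rw [h] at hk'; simp at hk'
            | inr b => simp [h])
          (hfinj.injOn)
        simpa using this
      have hP : r + 1 ≤ P.card := by omega
      -- construct a large partial transversal of B
      set S : Finset α := Finset.univ.filter
        (fun a : α => ∃ k : ↥K, f k = Sum.inl a) with hSdef
      have hPS : P.card ≤ S.card := by
        apply Finset.card_le_card_of_injOn (fun k => (f k).elim id (fun _ => default))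
        · intro k hk
          have hk' : (f k).isLeft := (Finset.mem_filter.mp hk).2
          obtain ⟨a, ha⟩ := Sum.isLeft_iff.mp hk'
          simp only [hSdef, Finset.mem_coe, Finset.mem_filter, Finset.mem_univ, true_and, ha]
          exact ⟨k, ha⟩
        · intro k1 hk1 k2 hk2 heq
          obtain ⟨a1, ha1⟩ := Sum.isLeft_iff.mp (Finset.mem_filter.mp hk1).2
          obtain ⟨a2, ha2⟩ := Sum.isLeft_iff.mp (Finset.mem_filter.mp hk2).2
          simp only [ha1, ha2, Sum.elim_inl, id] at heq
          exact hfinj (by rw [ha1, ha2, heq])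
      have hStr : IsPartialTransversal B S := by
        have hmem : ∀ s : ↥S, ∃ k : ↥K, f k = Sum.inl (s : α) := fun s => by
          have := (Finset.mem_filter.mp s.2).2
          exact this
        refine ⟨fun s => ((hmem s).choose : ↥K).1, ?_, ?_⟩
        · intro s1 s2 h12
          have h1 := (hmem s1).choose_spec
          have h2 := (hmem s2).choose_spec
          have : (hmem s1).choose = (hmem s2).choose := Subtype.ext h12
          rw [this] at h1
          rw [h2] at h1
          exact Subtype.ext (Sum.inl_injective h1).symm
        · intro s
          have h1 := (hmem s).choose_spec
          have := hfmem (hmem s).choose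
          rw [h1, htdef] at this
          simpa using Finset.inl_mem_disjSum.mp this
      have := hub S ((hsame S).mp hStr)
      omega
    rw [← Finset.all_card_le_biUnion_card_iff_exists_injective t] at hnoSDR
    push_neg at hnoSDR
    obtain ⟨s, hs⟩ := hnoSDR
    have hsne : s.Nonempty := Finset.card_pos.mp (by omega)
    set K' : Finset κ := s.image Subtype.val with hK'def
    set X : Finset α := K'.biUnion (fun k => (B k).toFinset) with hXdef
    have hK'K : K' ⊆ K := by
      intro k hk
      obtain ⟨k', _, rfl⟩ := Finset.mem_image.mp hk
      exact k'.2
    have hK'card : K'.card = s.card := Finset.card_image_of_injective _ Subtype.val_injective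
    have hbiU : s.biUnion t = X.disjSum Finset.univ := by
      ext x
      cases x with
      | inl a =>
        simp only [Finset.mem_biUnion, htdef, Finset.inl_mem_disjSum, hXdef, hK'def,
          Finset.mem_image]
        constructor
        · rintro ⟨k, hk, hak⟩
          exact ⟨k.1, ⟨k, hk, rfl⟩, hak⟩
        · rintro ⟨k, ⟨k', hk', rfl⟩, hak⟩
          exact ⟨k', hk', hak⟩
      | inr b =>
        constructor
        · intro _
          exact Finset.inr_mem_disjSum.mpr (Finset.mem_univ b)
        · intro _
          obtain ⟨k, hk⟩ := hsne
          refine Finset.mem_biUnion.mpr ⟨k, hk, ?_⟩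
          simp [htdef]
    have hXd : X.card + d ≤ K'.card := by
      have := hs
      rw [hbiU] at this
      rw [Finset.card_disjSum] at this
      simp only [Finset.card_univ, Fintype.card_fin] at this
      omega
    -- pick e ∈ X
    have hXne : X.Nonempty := by
      obtain ⟨k', hk'⟩ := hsne
      have hk'' : B k'.1 ≠ ∅ := by
        have hm : (k' : κ) ∈ Finset.univ.filter (fun k => B k ≠ ∅) := k'.2
        exact (Finset.mem_filter.mp hm).2
      obtain ⟨a, ha⟩ := Set.nonempty_iff_ne_empty.mpr hk''
      exact ⟨a, Finset.mem_biUnion.mpr ⟨k'.1, Finset.mem_image_of_mem _ hk',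
        Set.mem_toFinset.mpr ha⟩⟩
    obtain ⟨e, he⟩ := hXne
    obtain ⟨S₁, hS₁A, hS₁card, heS₁⟩ := hnocoloop e
    obtain ⟨f₁, hf₁inj, hf₁mem⟩ := (hsame S₁).mpr hS₁A
    set Q : Finset ↥S₁ := Finset.univ.filter (fun x => f₁ x ∈ K') with hQdef
    set Qc : Finset ↥S₁ := Finset.univ.filter (fun x => ¬ f₁ x ∈ K') with hQcdef
    have hsplit : Q.card + Qc.card = r := by
      rw [hQdef, hQcdef, Finset.card_filter_add_card_filter_not]
      simp [hS₁card]
    have hQX : Q.card ≤ X.card := by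
      refine Finset.card_le_card_of_injOn (s := Q) (t := X) (fun x => (x : α)) ?_ ?_
      · intro x hx
        have hx' : f₁ x ∈ K' := (Finset.mem_filter.mp hx).2
        exact Finset.mem_biUnion.mpr ⟨f₁ x, hx', Set.mem_toFinset.mpr (hf₁mem x)⟩
      · exact fun x1 _ x2 _ h => Subtype.ext h
    have hQc : Qc.card ≤ (K \ K').card := by
      refine Finset.card_le_card_of_injOn (s := Qc) (t := K \ K') (fun x => f₁ x) ?_ ?_
      · intro x hx
        have hx' : ¬ f₁ x ∈ K' := (Finset.mem_filter.mp hx).2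
        refine Finset.mem_sdiff.mpr ⟨?_, hx'⟩
        simp only [hKdef, Finset.mem_filter, Finset.mem_univ, true_and]
        exact Set.nonempty_iff_ne_empty.mp ⟨x, hf₁mem x⟩
      · exact hf₁inj.injOn
    have hsd : (K \ K').card = K.card - K'.card := Finset.card_sdiff_of_subset hK'K
    have hK'le : K'.card ≤ K.card := Finset.card_le_card hK'K
    have hQeq : Q.card = X.card := by omega
    have hinj : Set.InjOn (fun x : ↥S₁ => (x : α)) Q :=
      fun x1 _ x2 _ h => Subtype.ext h
    have himg : Q.image (fun x : ↥S₁ => (x : α)) = X := by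
      apply Finset.eq_of_subset_of_card_le
      · intro a ha
        obtain ⟨x, hx, rfl⟩ := Finset.mem_image.mp ha
        have hx' : f₁ x ∈ K' := (Finset.mem_filter.mp hx).2
        exact Finset.mem_biUnion.mpr ⟨f₁ x, hx', Set.mem_toFinset.mpr (hf₁mem x)⟩
      · rw [Finset.card_image_of_injOn hinj]
        omega
    rw [← himg] at he
    obtain ⟨x, _, rfl⟩ := Finset.mem_image.mp he
    exact heS₁ x.2
  omega
end

section
/- Let E be a finite set and let 𝒜 = (A_1, …, A_r) be a family of r subsets of E whose rank (maximum cardinality of a partial transversal) is r. Then there exists a family 𝒜* = (A*_1, …, A*_r) of r subsets of E with the same partial transversals as 𝒜 such that for every family ℬ = (B_1, …, B_r) of r subsets of E with the same partial transversals as 𝒜, there is a permutation σ of {1, …, r} with B_{σ(i)} ⊆ A*_i for all i. That is, every transversal matroid of rank r has a maximal r-presentation dominating all of its r-presentations. -/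
namespace TvP
set_option linter.unusedSectionVars false
set_option linter.unusedVariables false

attribute [local instance] Classical.propDecidable

variable {α : Type*} [Fintype α] {r : ℕ} [NeZero r]

/-- total-function version of partial transversal -/
def PT (B : Fin r → Set α) (S : Finset α) : Prop :=
  ∃ f : α → Fin r, Set.InjOn f S ∧ ∀ x ∈ S, x ∈ B (f x)

theorem PT_iff (B : Fin r → Set α) (S : Finset α) :
    PT B S ↔ IsPartialTransversal B S := by
  constructor
  · rintro ⟨f, hinj, hmem⟩
    refine ⟨fun s => f s, ?_, fun s => hmem s s.2⟩
    intro a b hab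
    exact Subtype.ext (hinj a.2 b.2 hab)
  · rintro ⟨f, hinj, hmem⟩
    refine ⟨fun x => if h : x ∈ S then f ⟨x, h⟩ else Classical.arbitrary _, ?_, ?_⟩
    · intro a ha b hb hab
      dsimp only at hab
      rw [dif_pos (Finset.mem_coe.mp ha), dif_pos (Finset.mem_coe.mp hb)] at hab
      have := hinj hab
      exact Subtype.ext_iff.mp this
    · intro x hx; simpa [dif_pos hx] using hmem ⟨x, hx⟩

/-- instance-free cardinality of a filtered universe -/
lemma ncard_eq_filter {p : Fin r → Prop} [DecidablePred p] :
    Nat.card {j : Fin r // p j} = (Finset.univ.filter p).card := by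
  rw [Nat.card_eq_fintype_card, Fintype.card_subtype]

/-- slots meeting X -/
noncomputable def NB (B : Fin r → Set α) (X : Finset α) : Finset (Fin r) :=
  Finset.univ.filter (fun j => ∃ x ∈ X, x ∈ B j)

lemma mem_NB {B : Fin r → Set α} {X : Finset α} {j : Fin r} :
    j ∈ NB B X ↔ ∃ x ∈ X, x ∈ B j := by simp [NB]

lemma NB_mono {B : Fin r → Set α} {X Y : Finset α} (h : X ⊆ Y) : NB B X ⊆ NB B Y := by
  intro j hj; rw [mem_NB] at *; obtain ⟨x, hx, hxB⟩ := hj; exact ⟨x, h hx, hxB⟩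

lemma NB_union {B : Fin r → Set α} {X Y : Finset α} :
    NB B (X ∪ Y) = NB B X ∪ NB B Y := by
  ext j
  simp only [mem_NB, Finset.mem_union]
  constructor
  · rintro ⟨x, hx | hx, hB⟩
    · exact Or.inl ⟨x, hx, hB⟩
    · exact Or.inr ⟨x, hx, hB⟩
  · rintro (⟨x, hx, hB⟩ | ⟨x, hx, hB⟩)
    · exact ⟨x, Or.inl hx, hB⟩
    · exact ⟨x, Or.inr hx, hB⟩

lemma PT.subset {B : Fin r → Set α} {S S' : Finset α} (h : PT B S) (hs : S' ⊆ S) : PT B S' := by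
  obtain ⟨f, hinj, hmem⟩ := h
  exact ⟨f, hinj.mono hs, fun x hx => hmem x (hs hx)⟩

lemma PT.empty {B : Fin r → Set α} : PT B (∅ : Finset α) :=
  ⟨fun _ => Classical.arbitrary _, by simp [Set.InjOn], by simp⟩

lemma PT.card_le_NB {B : Fin r → Set α} {S : Finset α} (h : PT B S) :
    S.card ≤ (NB B S).card := by
  obtain ⟨f, hinj, hmem⟩ := h
  apply Finset.card_le_card_of_injOn f
  · intro x hx; rw [Finset.mem_coe, mem_NB]; exact ⟨x, hx, hmem x hx⟩
  · exact fun a ha b hb => hinj ha hb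

lemma PT.card_le_r {B : Fin r → Set α} {S : Finset α} (h : PT B S) : S.card ≤ r := by
  have := h.card_le_NB
  calc S.card ≤ (NB B S).card := this
    _ ≤ (Finset.univ : Finset (Fin r)).card := Finset.card_le_card (Finset.subset_univ _)
    _ = r := by simp

/-- Hall: hard direction -/
lemma PT_of_hall {B : Fin r → Set α} {S : Finset α}
    (h : ∀ W ⊆ S, W.card ≤ (NB B W).card) : PT B S := by
  have key : ∀ s : Finset {x // x ∈ S},
      s.card ≤ (s.biUnion (fun x => Finset.univ.filter (fun j => (x : α) ∈ B j))).card := by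
    intro s
    have himg : (s.image Subtype.val).card = s.card :=
      Finset.card_image_of_injective _ Subtype.coe_injective
    have hsub : s.image Subtype.val ⊆ S := by
      intro x hx; simp only [Finset.mem_image] at hx; obtain ⟨y, _, rfl⟩ := hx; exact y.2
    have hb : NB B (s.image Subtype.val)
        = s.biUnion (fun x => Finset.univ.filter (fun j => (x : α) ∈ B j)) := by
      ext j
      simp only [mem_NB, Finset.mem_biUnion, Finset.mem_image, Finset.mem_filter,
        Finset.mem_univ, true_and]
      constructor
      · rintro ⟨x, ⟨y, hy, rfl⟩, hxB⟩; exact ⟨y, hy, hxB⟩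
      · rintro ⟨y, hy, hB⟩; exact ⟨(y : α), ⟨y, hy, rfl⟩, hB⟩
    rw [← hb, ← himg]
    exact h _ hsub
  obtain ⟨f, hinj, hf⟩ :=
    (Finset.all_card_le_biUnion_card_iff_existsInjective'
      (fun x : {x // x ∈ S} => Finset.univ.filter (fun j => (x : α) ∈ B j))).mp key
  rw [PT_iff]
  refine ⟨f, hinj, fun s => ?_⟩
  have := hf s; simp only [Finset.mem_filter] at this; exact this.2


lemma NB_empty {B : Fin r → Set α} : NB B (∅ : Finset α) = ∅ := by
  ext j; simp [mem_NB]

lemma exists_violator_of_not_PT {B : Fin r → Set α} {S : Finset α} (h : ¬ PT B S) :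
    ∃ W ⊆ S, (NB B W).card < W.card := by
  by_contra hc
  push_neg at hc
  exact h (PT_of_hall (fun W hW => hc W hW))

/-- The exchange/augmentation property of transversal systems. -/
lemma PT.augment {B : Fin r → Set α} {S T : Finset α} (hS : PT B S) (hT : PT B T)
    (hcard : S.card < T.card) : ∃ t ∈ T, t ∉ S ∧ PT B (insert t S) := by
  by_contra hc
  push_neg at hc
  -- main induction: deficiency accumulation
  have main : ∀ D : Finset α, D ⊆ T \ S →
      ∃ U : Finset α, U ⊆ S ∪ D ∧ D ⊆ U ∧ (NB B U).card + D.card ≤ U.card := by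
    intro D
    induction D using Finset.induction_on with
    | empty => intro _; exact ⟨∅, by simp, by simp, by simp [NB_empty]⟩
    | @insert t D' ht ih =>
      intro hins
      have hD'sub : D' ⊆ T \ S := fun x hx => hins (Finset.mem_insert_of_mem hx)
      obtain ⟨U, hU1, hU2, hU3⟩ := ih hD'sub
      have htTS : t ∈ T \ S := hins (Finset.mem_insert_self t D')
      have htT : t ∈ T := (Finset.mem_sdiff.mp htTS).1
      have htS : t ∉ S := (Finset.mem_sdiff.mp htTS).2
      have hnPT : ¬ PT B (insert t S) := hc t htT htS
      obtain ⟨W, hWsub, hWdef⟩ := exists_violator_of_not_PT hnPT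
      have htW : t ∈ W := by
        by_contra htW
        have : W ⊆ S := by
          intro x hx
          rcases Finset.mem_insert.mp (hWsub hx) with h | h
          · exact absurd (h ▸ hx) htW
          · exact h
        exact absurd ((hS.subset this).card_le_NB) (not_le.mpr hWdef)
      refine ⟨U ∪ W, ?_, ?_, ?_⟩
      · intro x hx
        rcases Finset.mem_union.mp hx with h | h
        · rcases Finset.mem_union.mp (hU1 h) with h' | h'
          · exact Finset.mem_union_left _ h'
          · exact Finset.mem_union_right _ (Finset.mem_insert_of_mem h')
        · rcases Finset.mem_insert.mp (hWsub h) with h' | h'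
          · exact Finset.mem_union_right _ (h' ▸ Finset.mem_insert_self t D')
          · exact Finset.mem_union_left _ h'
      · intro x hx
        rcases Finset.mem_insert.mp hx with h | h
        · exact Finset.mem_union_right _ (h ▸ htW)
        · exact Finset.mem_union_left _ (hU2 h)
      · -- cardinality accounting
        have hUWS : U ∩ W ⊆ S := by
          intro x hx
          have hxU := (Finset.mem_inter.mp hx).1
          have hxW := (Finset.mem_inter.mp hx).2
          rcases Finset.mem_insert.mp (hWsub hxW) with h | h
          · exfalso
            rcases Finset.mem_union.mp (hU1 hxU) with h' | h'
            · exact htS (h ▸ h')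
            · exact ht (h ▸ h')
          · exact h
        have hPTint : (U ∩ W).card ≤ (NB B (U ∩ W)).card := (hS.subset hUWS).card_le_NB
        have hNBint : NB B (U ∩ W) ⊆ NB B U ∩ NB B W := by
          intro j hj
          exact Finset.mem_inter.mpr ⟨NB_mono Finset.inter_subset_left hj,
            NB_mono Finset.inter_subset_right hj⟩
        have e1 : (NB B (U ∪ W)).card + (NB B U ∩ NB B W).card
            = (NB B U).card + (NB B W).card := by
          rw [NB_union]; exact Finset.card_union_add_card_inter _ _
        have e2 : (U ∪ W).card + (U ∩ W).card = U.card + W.card :=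
          Finset.card_union_add_card_inter _ _
        have h3 : (NB B (U ∪ W)).card + (U ∩ W).card ≤ (NB B U).card + (NB B W).card := by
          calc (NB B (U ∪ W)).card + (U ∩ W).card
              ≤ (NB B (U ∪ W)).card + (NB B (U ∩ W)).card := by omega
            _ ≤ (NB B (U ∪ W)).card + (NB B U ∩ NB B W).card := by
                have := Finset.card_le_card hNBint; omega
            _ = (NB B U).card + (NB B W).card := e1
        have hWcard : (NB B W).card + 1 ≤ W.card := hWdef
        have hDins : (insert t D').card = D'.card + 1 := Finset.card_insert_of_notMem ht
        rw [hDins]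
        omega
  obtain ⟨U, hU1, hU2, hU3⟩ := main (T \ S) (le_refl _)
  -- final counting
  have hTU : (T ∩ U).card ≤ (NB B U).card := by
    calc (T ∩ U).card ≤ (NB B (T ∩ U)).card := (hT.subset Finset.inter_subset_left).card_le_NB
      _ ≤ (NB B U).card := Finset.card_le_card (NB_mono Finset.inter_subset_right)
  have hUsub : U ⊆ S ∪ T := by
    intro x hx
    rcases Finset.mem_union.mp (hU1 hx) with h | h
    · exact Finset.mem_union_left _ h
    · exact Finset.mem_union_right _ (Finset.mem_sdiff.mp h).1
  have hTdiff : T \ U ⊆ (S ∪ T) \ U := by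
    intro x hx
    rw [Finset.mem_sdiff] at *
    exact ⟨Finset.mem_union_right _ hx.1, hx.2⟩
  have h4 : (T \ U).card ≤ (S ∪ T).card - U.card := by
    calc (T \ U).card ≤ ((S ∪ T) \ U).card := Finset.card_le_card hTdiff
      _ = (S ∪ T).card - U.card := Finset.card_sdiff_of_subset hUsub
  have h5 : (S ∪ T).card = S.card + (T \ S).card := by
    rw [← Finset.union_sdiff_self_eq_union]
    exact Finset.card_union_of_disjoint Finset.disjoint_sdiff
  have h6 : (T \ U).card + (T ∩ U).card = T.card := Finset.card_sdiff_add_card_inter T U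
  have hUcard : U.card ≤ (S ∪ T).card := Finset.card_le_card hUsub
  omega


variable {A : Fin r → Set α}

/-- a circuit: minimal non-transversal set -/
def IsCircuit (A : Fin r → Set α) (Q : Finset α) : Prop :=
  ¬ PT A Q ∧ ∀ q ∈ Q, PT A (Q.erase q)

lemma exists_circuit_subset {S : Finset α} (h : ¬ PT A S) :
    ∃ Q ⊆ S, IsCircuit A Q := by
  classical
  have hne : (S.powerset.filter (fun W => ¬ PT A W)).Nonempty :=
    ⟨S, by simp [Finset.mem_filter, Finset.mem_powerset, h]⟩
  obtain ⟨Q, hQmem, hQmin⟩ := Finset.exists_min_image _ Finset.card hne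
  rw [Finset.mem_filter, Finset.mem_powerset] at hQmem
  refine ⟨Q, hQmem.1, hQmem.2, fun q hq => ?_⟩
  by_contra hbad
  have hmem : Q.erase q ∈ S.powerset.filter (fun W => ¬ PT A W) := by
    rw [Finset.mem_filter, Finset.mem_powerset]
    exact ⟨(Finset.erase_subset _ _).trans hQmem.1, hbad⟩
  have := hQmin _ hmem
  have hlt : (Q.erase q).card < Q.card := Finset.card_erase_lt_of_mem hq
  omega

lemma IsCircuit.pt_of_ssubset {Q W : Finset α} (hQ : IsCircuit A Q) (h : W ⊂ Q) : PT A W := by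
  obtain ⟨q, hqQ, hqW⟩ := Finset.exists_of_ssubset h
  exact (hQ.2 q hqQ).subset (fun x hx => Finset.mem_erase.mpr
    ⟨fun hxq => hqW (hxq ▸ hx), h.1 hx⟩)

lemma IsCircuit.nonempty {Q : Finset α} (hQ : IsCircuit A Q) : Q.Nonempty := by
  rcases Q.eq_empty_or_nonempty with h | h
  · exact absurd (h ▸ PT.empty) hQ.1
  · exact h

/-- weak circuit elimination -/
lemma circuit_weak_elim {C1 C2 : Finset α} (h1 : IsCircuit A C1) (h2 : IsCircuit A C2)
    (hne : C1 ≠ C2) {e : α} (he1 : e ∈ C1) (he2 : e ∈ C2) :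
    ¬ PT A ((C1 ∪ C2).erase e) := by
  intro hD
  -- pick f ∈ C1 \ C2
  have hf : (C1 \ C2).Nonempty := by
    rw [Finset.sdiff_nonempty]
    intro hsub
    rcases eq_or_lt_of_le (Finset.le_iff_subset.mpr hsub) with h | h
    · exact hne h
    · exact h1.1 (h2.pt_of_ssubset h)
  obtain ⟨f, hfm⟩ := hf
  have hfC1 : f ∈ C1 := (Finset.mem_sdiff.mp hfm).1
  have hfC2 : f ∉ C2 := (Finset.mem_sdiff.mp hfm).2
  set 𝒞 := (C1 ∪ C2).powerset.filter (fun W => PT A W ∧ C1.erase f ⊆ W) with h𝒞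
  have hCne : 𝒞.Nonempty := by
    refine ⟨C1.erase f, ?_⟩
    rw [h𝒞, Finset.mem_filter, Finset.mem_powerset]
    exact ⟨(Finset.erase_subset _ _).trans Finset.subset_union_left,
      h1.2 f hfC1, Finset.Subset.refl _⟩
  obtain ⟨I, hImem, hImax⟩ := Finset.exists_max_image 𝒞 Finset.card hCne
  rw [h𝒞, Finset.mem_filter, Finset.mem_powerset] at hImem
  obtain ⟨hIsub, hIPT, hIC1⟩ := hImem
  have hfI : f ∉ I := by
    intro hfI
    have : C1 ⊆ I := by
      intro x hx
      by_cases hxf : x = f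
      · exact hxf ▸ hfI
      · exact hIC1 (Finset.mem_erase.mpr ⟨hxf, hx⟩)
    exact h1.1 (hIPT.subset this)
  have hg : ∃ g ∈ C2, g ∉ I := by
    by_contra hgc
    push_neg at hgc
    exact h2.1 (hIPT.subset hgc)
  obtain ⟨g, hgC2, hgI⟩ := hg
  have hgf : g ≠ f := fun h => hfC2 (h ▸ hgC2)
  -- card bound : I ⊆ (C1 ∪ C2) \ {f, g}
  have hIsub2 : I ⊆ ((C1 ∪ C2).erase f).erase g := by
    intro x hx
    exact Finset.mem_erase.mpr ⟨fun h => hgI (h ▸ hx),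
      Finset.mem_erase.mpr ⟨fun h => hfI (h ▸ hx), hIsub hx⟩⟩
  have hcard1 : I.card ≤ (C1 ∪ C2).card - 2 := by
    have h1' : ((C1 ∪ C2).erase f).card = (C1 ∪ C2).card - 1 :=
      Finset.card_erase_of_mem (Finset.mem_union_left _ hfC1)
    have hgm : g ∈ (C1 ∪ C2).erase f :=
      Finset.mem_erase.mpr ⟨hgf, Finset.mem_union_right _ hgC2⟩
    have h2' : (((C1 ∪ C2).erase f).erase g).card = ((C1 ∪ C2).erase f).card - 1 :=
      Finset.card_erase_of_mem hgm
    have := Finset.card_le_card hIsub2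
    omega
  have hcard2 : ((C1 ∪ C2).erase e).card = (C1 ∪ C2).card - 1 :=
    Finset.card_erase_of_mem (Finset.mem_union_left _ he1)
  have hbig : 2 ≤ (C1 ∪ C2).card := by
    have : ({g, f} : Finset α) ⊆ C1 ∪ C2 := by
      intro x hx
      rcases Finset.mem_insert.mp hx with h | h
      · exact Finset.mem_union_right _ (h ▸ hgC2)
      · exact Finset.mem_union_left _ ((Finset.mem_singleton.mp h) ▸ hfC1)
    have hc : ({g, f} : Finset α).card = 2 := Finset.card_pair hgf
    have := Finset.card_le_card this
    omega
  have hlt : I.card < ((C1 ∪ C2).erase e).card := by omega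
  obtain ⟨t, htD, htI, htPT⟩ := hIPT.augment hD hlt
  have : insert t I ∈ 𝒞 := by
    rw [h𝒞, Finset.mem_filter, Finset.mem_powerset]
    refine ⟨?_, htPT, hIC1.trans (Finset.subset_insert _ _)⟩
    intro x hx
    rcases Finset.mem_insert.mp hx with h | h
    · exact (Finset.erase_subset _ _) (h ▸ htD)
    · exact hIsub h
  have := hImax _ this
  have : (insert t I).card = I.card + 1 := Finset.card_insert_of_notMem htI
  omega

/-- strong circuit elimination -/
lemma circuit_strong_elim : ∀ n : ℕ, ∀ C1 C2 : Finset α, ∀ e f : α,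
    (C1 ∪ C2).card ≤ n → IsCircuit A C1 → IsCircuit A C2 →
    e ∈ C1 → e ∈ C2 → f ∈ C1 → f ∉ C2 →
    ∃ C3, IsCircuit A C3 ∧ C3 ⊆ (C1 ∪ C2).erase e ∧ f ∈ C3 := by
  intro n
  induction n with
  | zero =>
    intro C1 C2 e f hn h1 _ he1 _ _ _
    exfalso
    have : e ∈ C1 ∪ C2 := Finset.mem_union_left _ he1
    have := Finset.card_pos.mpr ⟨e, this⟩
    omega
  | succ n ih =>
    intro C1 C2 e f hn h1 h2 he1 he2 hf1 hf2
    have hne : C1 ≠ C2 := fun h => hf2 (h ▸ hf1)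
    have hdep := circuit_weak_elim h1 h2 hne he1 he2
    obtain ⟨C3, hC3sub, hC3⟩ := exists_circuit_subset hdep
    by_cases hfC3 : f ∈ C3
    · exact ⟨C3, hC3, hC3sub, hfC3⟩
    -- pick g ∈ C3 ∩ (C2 \ C1)
    have hg : ∃ g ∈ C3, g ∈ C2 ∧ g ∉ C1 := by
      by_contra hgc
      push_neg at hgc
      have : C3 ⊆ C1.erase e := by
        intro x hx
        have hx' := hC3sub hx
        rw [Finset.mem_erase, Finset.mem_union] at hx'
        rcases hx'.2 with h | h
        · exact Finset.mem_erase.mpr ⟨hx'.1, h⟩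
        · exact Finset.mem_erase.mpr ⟨hx'.1, by
            by_contra hxC1
            exact hxC1 (hgc x hx h)⟩
      exact hC3.1 ((h1.2 e he1).subset this)
    obtain ⟨g, hgC3, hgC2, hgC1⟩ := hg
    have heC3 : e ∉ C3 := fun h => (Finset.mem_erase.mp (hC3sub h)).1 rfl
    -- IH on (C2, C3) eliminating g, keeping e
    have hm1 : (C2 ∪ C3).card ≤ n := by
      have hsub : C2 ∪ C3 ⊆ (C1 ∪ C2).erase f := by
        intro x hx
        rcases Finset.mem_union.mp hx with h | h
        · exact Finset.mem_erase.mpr ⟨fun hh => hf2 (hh ▸ h), Finset.mem_union_right _ h⟩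
        · have := hC3sub h
          rw [Finset.mem_erase] at this
          exact Finset.mem_erase.mpr ⟨fun hh => hfC3 (hh ▸ h), this.2⟩
      have h1' : ((C1 ∪ C2).erase f).card = (C1 ∪ C2).card - 1 :=
        Finset.card_erase_of_mem (Finset.mem_union_left _ hf1)
      have := Finset.card_le_card hsub
      have hpos : 0 < (C1 ∪ C2).card := Finset.card_pos.mpr ⟨f, Finset.mem_union_left _ hf1⟩
      omega
    obtain ⟨C4, hC4, hC4sub, heC4⟩ := ih C2 C3 g e hm1 h2 hC3 hgC2 hgC3 he2 heC3
    -- IH on (C1, C4) eliminating e, keeping f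
    have hfC4 : f ∉ C4 := by
      intro h
      have := hC4sub h
      rw [Finset.mem_erase, Finset.mem_union] at this
      rcases this.2 with h' | h'
      · exact hf2 h'
      · exact hfC3 h'
    have hgC4 : g ∉ C4 := fun h => (Finset.mem_erase.mp (hC4sub h)).1 rfl
    have hm2 : (C1 ∪ C4).card ≤ n := by
      have hsub : C1 ∪ C4 ⊆ (C1 ∪ C2).erase g := by
        intro x hx
        rcases Finset.mem_union.mp hx with h | h
        · exact Finset.mem_erase.mpr ⟨fun hh => hgC1 (hh ▸ h), Finset.mem_union_left _ h⟩
        · have := hC4sub h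
          rw [Finset.mem_erase, Finset.mem_union] at this
          rcases this.2 with h' | h'
          · exact Finset.mem_erase.mpr ⟨fun hh => hgC4 (hh ▸ h), Finset.mem_union_right _ h'⟩
          · have := hC3sub h'
            rw [Finset.mem_erase] at this
            exact Finset.mem_erase.mpr ⟨fun hh => hgC4 (hh ▸ h), this.2⟩
      have h1' : ((C1 ∪ C2).erase g).card = (C1 ∪ C2).card - 1 :=
        Finset.card_erase_of_mem (Finset.mem_union_right _ hgC2)
      have := Finset.card_le_card hsub
      have hpos : 0 < (C1 ∪ C2).card := Finset.card_pos.mpr ⟨f, Finset.mem_union_left _ hf1⟩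
      omega
    have heC4' : e ∈ C4 := heC4
    obtain ⟨C5, hC5, hC5sub, hfC5⟩ := ih C1 C4 e f hm2 h1 hC4 he1 heC4' hf1 hfC4
    refine ⟨C5, hC5, ?_, hfC5⟩
    intro x hx
    have := hC5sub hx
    rw [Finset.mem_erase, Finset.mem_union] at this
    rcases this.2 with h | h
    · exact Finset.mem_erase.mpr ⟨this.1, Finset.mem_union_left _ h⟩
    · have := hC4sub h
      rw [Finset.mem_erase, Finset.mem_union] at this
      rcases this.2 with h' | h'
      · exact Finset.mem_erase.mpr ⟨(Finset.mem_erase.mp (hC5sub hx)).1,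
          Finset.mem_union_right _ h'⟩
      · have := hC3sub h'
        rw [Finset.mem_erase] at this
        exact Finset.mem_erase.mpr ⟨(Finset.mem_erase.mp (hC5sub hx)).1, this.2⟩


/-- `B` presents the same transversal system as `A` -/
def Pres (A B : Fin r → Set α) : Prop := ∀ S : Finset α, PT B S ↔ PT A S

lemma PT.mono_family {B B' : Fin r → Set α} {S : Finset α} (h : ∀ i, B i ⊆ B' i)
    (hS : PT B S) : PT B' S := by
  obtain ⟨f, hinj, hmem⟩ := hS
  exact ⟨f, hinj, fun x hx => h _ (hmem x hx)⟩

lemma NB_circuit_card {B : Fin r → Set α} (hB : Pres A B) {Q : Finset α}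
    (hQ : IsCircuit A Q) : (NB B Q).card + 1 = Q.card := by
  have hnB : ¬ PT B Q := fun h => hQ.1 ((hB Q).mp h)
  obtain ⟨W, hWsub, hWdef⟩ := exists_violator_of_not_PT hnB
  have hWQ : W = Q := by
    by_contra hne
    have hss : W ⊂ Q := lt_of_le_of_ne (Finset.le_iff_subset.mpr hWsub) hne
    have := ((hB W).mpr (hQ.pt_of_ssubset hss)).card_le_NB
    omega
  subst hWQ
  obtain ⟨q, hq⟩ := hQ.nonempty
  have hPTe : PT B (W.erase q) := (hB _).mpr (hQ.2 q hq)
  have h1 : (W.erase q).card ≤ (NB B (W.erase q)).card := hPTe.card_le_NB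
  have h2 : (NB B (W.erase q)).card ≤ (NB B W).card :=
    Finset.card_le_card (NB_mono (Finset.erase_subset _ _))
  have h3 : (W.erase q).card = W.card - 1 := Finset.card_erase_of_mem hq
  have hpos : 0 < W.card := Finset.card_pos.mpr ⟨q, hq⟩
  omega

/-- rigidity: every matching of a circuit minus a point covers exactly the slots meeting it -/
lemma matching_image_circuit {B : Fin r → Set α} (hB : Pres A B) {Q : Finset α}
    (hQ : IsCircuit A Q) {q : α} (hq : q ∈ Q) {f : α → Fin r}
    (hinj : Set.InjOn f (Q.erase q)) (hmem : ∀ x ∈ Q.erase q, x ∈ B (f x)) :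
    (Q.erase q).image f = NB B Q := by
  have hsub : (Q.erase q).image f ⊆ NB B Q := by
    intro j hj
    obtain ⟨x, hx, rfl⟩ := Finset.mem_image.mp hj
    exact mem_NB.mpr ⟨x, Finset.erase_subset _ _ hx, hmem x hx⟩
  have hcard : ((Q.erase q).image f).card = (Q.erase q).card :=
    Finset.card_image_of_injOn (fun a ha b hb => hinj ha hb)
  have h1 : (Q.erase q).card = Q.card - 1 := Finset.card_erase_of_mem hq
  have h2 := NB_circuit_card hB hQ
  apply Finset.eq_of_subset_of_card_le hsub
  omega

/-- key lemma: for a "cyclic" set X, the number of slots meeting X equals the size of any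
maximal partial transversal inside X, in every presentation. -/
lemma NB_card_of_cyclic {B : Fin r → Set α} (hB : Pres A B) {X : Finset α}
    (hcyc : ∀ x ∈ X, ∃ Q, IsCircuit A Q ∧ x ∈ Q ∧ Q ⊆ X) {T : Finset α}
    (hTX : T ⊆ X) (hTPT : PT A T) (hTmax : ∀ W ⊆ X, PT A W → W.card ≤ T.card) :
    (NB B X).card = T.card := by
  obtain ⟨f, finj, fmem⟩ := (hB T).mpr hTPT
  -- the image of the matching
  have himgcard : (T.image f).card = T.card :=
    Finset.card_image_of_injOn (fun a ha b hb => finj ha hb)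
  -- key claim by induction on the defect of a circuit
  have key : ∀ m : ℕ, ∀ Q : Finset α, IsCircuit A Q → Q ⊆ X → (Q \ T).card ≤ m →
      ∀ j : Fin r, (∃ x ∈ Q, x ∈ B j) → j ∈ T.image f := by
    intro m
    induction m with
    | zero =>
      intro Q hQ hQX hdef j _
      exfalso
      have : Q \ T = ∅ := Finset.card_eq_zero.mp (le_antisymm hdef (Nat.zero_le _))
      have hQT : Q ⊆ T := by
        intro x hx
        by_contra hxT
        exact absurd (Finset.mem_sdiff.mpr ⟨hx, hxT⟩) (by simp [this])
      exact hQ.1 (hTPT.subset hQT)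
    | succ n ih =>
      intro Q hQ hQX hdef j hj
      obtain ⟨x, hxQ, hxB⟩ := hj
      by_cases hxT : x ∈ T
      · -- x ∈ T
        by_cases hdef1 : (Q \ T).card ≤ 1
        · -- fundamental-type circuit : Q \ T = {y}
          have hQTne : (Q \ T).Nonempty := by
            rw [Finset.sdiff_nonempty]
            intro hQT
            exact hQ.1 (hTPT.subset hQT)
          obtain ⟨y, hy⟩ := hQTne
          have hQy : Q \ T = {y} :=
            Finset.eq_singleton_iff_unique_mem.mpr ⟨hy, fun z hz => by
              by_contra hzy
              have : ({z, y} : Finset α) ⊆ Q \ T := by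
                intro w hw
                rcases Finset.mem_insert.mp hw with h | h
                · exact h ▸ hz
                · exact (Finset.mem_singleton.mp h) ▸ hy
              have := Finset.card_le_card this
              rw [Finset.card_pair hzy] at this
              omega⟩
          have herase : Q.erase y ⊆ T := by
            intro z hz
            rw [Finset.mem_erase] at hz
            by_contra hzT
            have : z ∈ Q \ T := Finset.mem_sdiff.mpr ⟨hz.2, hzT⟩
            rw [hQy, Finset.mem_singleton] at this
            exact hz.1 this
          have hyQ : y ∈ Q := (Finset.mem_sdiff.mp hy).1
          have himg := matching_image_circuit hB hQ hyQ
            (finj.mono (Finset.coe_subset.mpr herase))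
            (fun z hz => fmem z (herase hz))
          have hjNB : j ∈ NB B Q := mem_NB.mpr ⟨x, hxQ, hxB⟩
          rw [← himg] at hjNB
          obtain ⟨z, hz, rfl⟩ := Finset.mem_image.mp hjNB
          exact Finset.mem_image_of_mem f (herase hz)
        · -- defect at least 2 : reduce via strong elimination
          push_neg at hdef1
          have hQTne : (Q \ T).Nonempty := Finset.card_pos.mp (by omega)
          obtain ⟨y, hy⟩ := hQTne
          have hyQ : y ∈ Q := (Finset.mem_sdiff.mp hy).1
          have hyT : y ∉ T := (Finset.mem_sdiff.mp hy).2
          -- fundamental circuit of y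
          have hnoPT : ¬ PT A (insert y T) := by
            intro hPT
            have hsub : insert y T ⊆ X := by
              intro z hz
              rcases Finset.mem_insert.mp hz with h | h
              · exact h ▸ hQX hyQ
              · exact hTX h
            have := hTmax _ hsub hPT
            rw [Finset.card_insert_of_notMem hyT] at this
            omega
          obtain ⟨Qy, hQysub, hQy⟩ := exists_circuit_subset hnoPT
          have hyQy : y ∈ Qy := by
            by_contra hyQy
            have : Qy ⊆ T := by
              intro z hz
              rcases Finset.mem_insert.mp (hQysub hz) with h | h
              · exact absurd (h ▸ hz) hyQy
              · exact h
            exact hQy.1 (hTPT.subset this)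
          by_cases hxQy : x ∈ Qy
          · -- use Q_y, defect ≤ 1
            have hdefy : (Qy \ T).card ≤ 1 := by
              have : Qy \ T ⊆ {y} := by
                intro z hz
                rw [Finset.mem_sdiff] at hz
                rcases Finset.mem_insert.mp (hQysub hz.1) with h | h
                · exact Finset.mem_singleton.mpr h
                · exact absurd h hz.2
              have := Finset.card_le_card this
              simpa using this
            have hQyX : Qy ⊆ X := by
              intro z hz
              rcases Finset.mem_insert.mp (hQysub hz) with h | h
              · exact h ▸ hQX hyQ
              · exact hTX h
            exact ih Qy hQy hQyX (by omega) j ⟨x, hxQy, hxB⟩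
          · -- strong elimination to shrink the defect
            have hxy : x ≠ y := fun h => hyT (h ▸ hxT)
            obtain ⟨C', hC', hC'sub, hxC'⟩ := circuit_strong_elim
              ((Q ∪ Qy).card) Q Qy y x (le_refl _) hQ hQy hyQ hyQy hxQ hxQy
            have hC'X : C' ⊆ X := by
              intro z hz
              have := hC'sub hz
              rw [Finset.mem_erase, Finset.mem_union] at this
              rcases this.2 with h | h
              · exact hQX h
              · rcases Finset.mem_insert.mp (hQysub h) with h' | h'
                · exact h' ▸ hQX hyQ
                · exact hTX h'
            have hC'def : (C' \ T).card ≤ n := by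
              have hsub : C' \ T ⊆ (Q \ T).erase y := by
                intro z hz
                rw [Finset.mem_sdiff] at hz
                have hz1 := hC'sub hz.1
                rw [Finset.mem_erase, Finset.mem_union] at hz1
                refine Finset.mem_erase.mpr ⟨hz1.1, ?_⟩
                rcases hz1.2 with h | h
                · exact Finset.mem_sdiff.mpr ⟨h, hz.2⟩
                · exfalso
                  rcases Finset.mem_insert.mp (hQysub h) with h' | h'
                  · exact hz1.1 h'
                  · exact hz.2 h'
              have h1 := Finset.card_le_card hsub
              have h2 : ((Q \ T).erase y).card = (Q \ T).card - 1 :=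
                Finset.card_erase_of_mem hy
              omega
            exact ih C' hC' hC'X hC'def j ⟨x, hxC', hxB⟩
      · -- x ∉ T : direct extension argument
        by_contra hjimg
        have hPTB : PT B (insert x T) := by
          refine ⟨Function.update f x j, ?_, ?_⟩
          · intro a ha b hb hab
            simp only [Finset.coe_insert, Set.mem_insert_iff, Finset.mem_coe] at ha hb
            rcases ha with ha | ha <;> rcases hb with hb | hb
            · exact ha.trans hb.symm
            · exfalso
              subst ha
              have hbx : b ≠ a := by rintro rfl; exact hxT hb
              rw [Function.update_self, Function.update_of_ne hbx] at hab
              exact hjimg (by rw [hab]; exact Finset.mem_image_of_mem f hb)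
            · exfalso
              subst hb
              have hax : a ≠ b := by rintro rfl; exact hxT ha
              rw [Function.update_self, Function.update_of_ne hax] at hab
              exact hjimg (by rw [← hab]; exact Finset.mem_image_of_mem f ha)
            · have hax : a ≠ x := by rintro rfl; exact hxT ha
              have hbx : b ≠ x := by rintro rfl; exact hxT hb
              rw [Function.update_of_ne hax, Function.update_of_ne hbx] at hab
              exact finj (Finset.mem_coe.mpr ha) (Finset.mem_coe.mpr hb) hab
          · intro z hz
            rcases Finset.mem_insert.mp hz with h | h
            · subst h; rw [Function.update_self]; exact hxB
            · have hzx : z ≠ x := by rintro rfl; exact hxT h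
              rw [Function.update_of_ne hzx]
              exact fmem z h
        have hPTA : PT A (insert x T) := (hB _).mp hPTB
        have hsub : insert x T ⊆ X := by
          intro z hz
          rcases Finset.mem_insert.mp hz with h | h
          · exact h ▸ hQX hxQ
          · exact hTX h
        have := hTmax _ hsub hPTA
        rw [Finset.card_insert_of_notMem hxT] at this
        omega
  -- conclude
  have hle : NB B X ⊆ T.image f := by
    intro j hj
    obtain ⟨x, hxX, hxB⟩ := mem_NB.mp hj
    obtain ⟨Q, hQ, hxQ, hQX⟩ := hcyc x hxX
    exact key ((Q \ T).card) Q hQ hQX (le_refl _) j ⟨x, hxQ, hxB⟩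
  have hge : T.card ≤ (NB B X).card := by
    have h1 : (T.image f) ⊆ NB B X := by
      intro j hj
      obtain ⟨z, hz, rfl⟩ := Finset.mem_image.mp hj
      exact mem_NB.mpr ⟨z, hTX hz, fmem z hz⟩
    calc T.card = (T.image f).card := himgcard.symm
      _ ≤ (NB B X).card := Finset.card_le_card h1
  have := Finset.card_le_card hle
  omega


/-- existence of a (pointwise-)maximal presentation -/
lemma exists_max_pres (A : Fin r → Set α) :
    ∃ Astar : Fin r → Set α, Pres A Astar ∧
      ∀ i x, x ∉ Astar i →
        ¬ Pres A (fun k => if k = i then insert x (Astar i) else Astar k) := by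
  classical
  set Pfam := (Finset.univ : Finset (Fin r → Finset α)).filter
    (fun F => Pres A (fun i => (F i : Set α))) with hPfam
  have hne : Pfam.Nonempty := by
    refine ⟨fun i => (A i).toFinset, ?_⟩
    rw [hPfam, Finset.mem_filter]
    refine ⟨Finset.mem_univ _, ?_⟩
    have : (fun i => ((A i).toFinset : Set α)) = A := by
      funext i; exact Set.coe_toFinset _
    rw [this]
    exact fun S => Iff.rfl
  obtain ⟨F, hFmem, hFmax⟩ := Finset.exists_max_image Pfam (fun F => ∑ i, (F i).card) hne
  rw [hPfam, Finset.mem_filter] at hFmem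
  refine ⟨fun i => (F i : Set α), hFmem.2, ?_⟩
  intro i x hx hPres
  set F' : Fin r → Finset α := fun k => if k = i then insert x (F i) else F k with hF'
  have hF'mem : F' ∈ Pfam := by
    rw [hPfam, Finset.mem_filter]
    refine ⟨Finset.mem_univ _, ?_⟩
    have : (fun k => ((F' k) : Set α)) =
        (fun k => if k = i then insert x ((F i : Set α)) else (F k : Set α)) := by
      funext k
      by_cases hk : k = i
      · simp [hF', hk]
      · simp [hF', hk]
    rw [this]
    exact hPres
  have hle := hFmax _ hF'mem
  have hxF : x ∉ F i := fun h => hx (Finset.mem_coe.mpr h)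
  have hgt : ∑ k, (F k).card < ∑ k, (F' k).card := by
    apply Finset.sum_lt_sum
    · intro k _
      by_cases hk : k = i
      · subst hk
        simp only [hF', if_pos rfl, Finset.card_insert_of_notMem hxF]
        omega
      · simp [hF', hk]
    · refine ⟨i, Finset.mem_univ i, ?_⟩
      simp only [hF', if_pos rfl, Finset.card_insert_of_notMem hxF]
      omega
  omega


/-- ★ : an element missing from a slot of a maximal presentation is witnessed by a circuit
avoiding that slot -/
lemma circuit_of_not_mem_max {Astar : Fin r → Set α} (hP : Pres A Astar)
    (hmax : ∀ i x, x ∉ Astar i →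
      ¬ Pres A (fun k => if k = i then insert x (Astar i) else Astar k))
    {i : Fin r} {x : α} (hx : x ∉ Astar i) :
    ∃ Q, IsCircuit A Q ∧ x ∈ Q ∧ i ∉ NB Astar Q := by
  set A' : Fin r → Set α := fun k => if k = i then insert x (Astar i) else Astar k with hA'
  have hnp : ¬ Pres A A' := hmax i x hx
  have hmono : ∀ k, Astar k ⊆ A' k := by
    intro k z hz
    by_cases hk : k = i
    · subst hk; simp only [hA', if_pos rfl]; exact Set.mem_insert_of_mem _ hz
    · simpa [hA', hk] using hz
  have hS : ∃ S, PT A' S ∧ ¬ PT A S := by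
    by_contra hc
    push_neg at hc
    apply hnp
    intro S
    constructor
    · exact fun h => hc S h
    · intro h
      exact ((hP S).mpr h).mono_family hmono
  obtain ⟨S, hSA', hSnA⟩ := hS
  obtain ⟨g, ginj, gmem⟩ := hSA'
  obtain ⟨Q, hQS, hQ⟩ := exists_circuit_subset hSnA
  have hs0 : ∃ s ∈ Q, s ∉ Astar (g s) := by
    by_contra hc
    push_neg at hc
    have : PT Astar Q := ⟨g, ginj.mono (Finset.coe_subset.mpr hQS), hc⟩
    exact hQ.1 ((hP Q).mp this)
  obtain ⟨s₀, hs₀Q, hs₀⟩ := hs0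
  have hgs₀ : g s₀ = i := by
    by_contra hgi
    have := gmem s₀ (hQS hs₀Q)
    rw [hA'] at this
    simp only [if_neg hgi] at this
    exact hs₀ this
  have hs₀x : s₀ = x := by
    have := gmem s₀ (hQS hs₀Q)
    rw [hA', hgs₀] at this
    simp only [if_pos rfl, Set.mem_insert_iff] at this
    rcases this with h | h
    · exact h
    · exact absurd (hgs₀ ▸ h) hs₀
  subst hs₀x
  refine ⟨Q, hQ, hs₀Q, ?_⟩
  -- g restricted to Q.erase s₀ is an Astar-matching avoiding slot i
  have hmatch : ∀ z ∈ Q.erase s₀, z ∈ Astar (g z) := by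
    intro z hz
    rw [Finset.mem_erase] at hz
    have hzi : g z ≠ i := by
      intro h
      exact hz.1 (ginj (Finset.mem_coe.mpr (hQS hz.2)) (Finset.mem_coe.mpr (hQS hs₀Q))
        (h.trans hgs₀.symm))
    have := gmem z (hQS hz.2)
    rw [hA'] at this
    simpa [if_neg hzi] using this
  have himg := matching_image_circuit hP hQ hs₀Q
    (ginj.mono (Finset.coe_subset.mpr ((Finset.erase_subset _ _).trans hQS))) hmatch
  intro hiNB
  rw [← himg, Finset.mem_image] at hiNB
  obtain ⟨z, hz, hgz⟩ := hiNB
  rw [Finset.mem_erase] at hz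
  exact hz.1 (ginj (Finset.mem_coe.mpr (hQS hz.2)) (Finset.mem_coe.mpr (hQS hs₀Q))
    (hgz.trans hgs₀.symm))

/-- the finset of circuits -/
noncomputable def circuitsF (A : Fin r → Set α) : Finset (Finset α) :=
  (Finset.univ : Finset α).powerset.filter (IsCircuit A)

lemma mem_circuitsF {Q : Finset α} : Q ∈ circuitsF A ↔ IsCircuit A Q := by
  simp [circuitsF]

/-- the type of a slot : which circuits meet it -/
noncomputable def typ (A B : Fin r → Set α) (j : Fin r) : Finset (Finset α) :=
  (circuitsF A).filter (fun Q => ∃ x ∈ Q, x ∈ B j)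

lemma count_typ_subset_eq {B C : Fin r → Set α} (hB : Pres A B) (hC : Pres A C)
    (G : Finset (Finset α)) :
    Nat.card {j : Fin r // typ A B j ⊆ G}
      = Nat.card {j : Fin r // typ A C j ⊆ G} := by
  classical
  set X : Finset α := ((circuitsF A) \ G).biUnion id with hX
  have hcyc : ∀ x ∈ X, ∃ Q, IsCircuit A Q ∧ x ∈ Q ∧ Q ⊆ X := by
    intro x hx
    rw [hX, Finset.mem_biUnion] at hx
    obtain ⟨Q, hQmem, hxQ⟩ := hx
    exact ⟨Q, mem_circuitsF.mp (Finset.mem_sdiff.mp hQmem).1, hxQ,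
      Finset.subset_biUnion_of_mem id hQmem⟩
  -- a maximum partial transversal inside X
  have hTne : (X.powerset.filter (PT A)).Nonempty :=
    ⟨∅, by simp [Finset.mem_filter, PT.empty]⟩
  obtain ⟨T, hTmem, hTmax'⟩ := Finset.exists_max_image _ Finset.card hTne
  rw [Finset.mem_filter, Finset.mem_powerset] at hTmem
  have hTmax : ∀ W ⊆ X, PT A W → W.card ≤ T.card := by
    intro W hW hWPT
    exact hTmax' W (by rw [Finset.mem_filter, Finset.mem_powerset]; exact ⟨hW, hWPT⟩)
  -- both counts equal r - T.card
  have main : ∀ D : Fin r → Set α, Pres A D →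
      Nat.card {j : Fin r // typ A D j ⊆ G} = r - T.card := by
    intro D hD
    rw [ncard_eq_filter]
    have hNB := NB_card_of_cyclic hD hcyc hTmem.1 hTmem.2 hTmax
    have hiff : ∀ j, typ A D j ⊆ G ↔ j ∉ NB D X := by
      intro j
      constructor
      · intro hsub hjNB
        obtain ⟨x, hxX, hxD⟩ := mem_NB.mp hjNB
        rw [hX, Finset.mem_biUnion] at hxX
        obtain ⟨Q, hQmem, hxQ⟩ := hxX
        have hQG : Q ∈ G := hsub (by
          rw [typ, Finset.mem_filter]
          exact ⟨(Finset.mem_sdiff.mp hQmem).1, x, hxQ, hxD⟩)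
        exact (Finset.mem_sdiff.mp hQmem).2 hQG
      · intro hjNB Q hQ
        rw [typ, Finset.mem_filter] at hQ
        obtain ⟨hQc, x, hxQ, hxD⟩ := hQ
        by_contra hQG
        have hxX : x ∈ X := by
          rw [hX, Finset.mem_biUnion]
          exact ⟨Q, Finset.mem_sdiff.mpr ⟨hQc, hQG⟩, hxQ⟩
        exact hjNB (mem_NB.mpr ⟨x, hxX, hxD⟩)
    have heq : Finset.univ.filter (fun j => typ A D j ⊆ G)
        = Finset.univ \ NB D X := by
      ext j
      simp only [Finset.mem_filter, Finset.mem_univ, true_and, Finset.mem_sdiff]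
      exact hiff j
    rw [heq, Finset.card_sdiff_of_subset (Finset.subset_univ _), hNB]
    congr 1
    simp
  rw [main B hB, main C hC]



/-- downset counts determine fiber counts -/
lemma count_eq_of_downsets {β : Type*} (f g : Fin r → Finset β)
    (h0 : ∀ G, Nat.card {j : Fin r // f j ⊆ G} = Nat.card {j : Fin r // g j ⊆ G}) :
    ∀ G, Nat.card {j : Fin r // f j = G} = Nat.card {j : Fin r // g j = G} := by
  classical
  have h : ∀ G, (Finset.univ.filter fun j => f j ⊆ G).card
      = (Finset.univ.filter fun j => g j ⊆ G).card := by
    intro G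
    rw [← ncard_eq_filter, ← ncard_eq_filter]
    exact h0 G
  suffices hs : ∀ G, (Finset.univ.filter fun j => f j = G).card
      = (Finset.univ.filter fun j => g j = G).card by
    intro G
    rw [ncard_eq_filter, ncard_eq_filter]
    exact hs G
  have split : ∀ (f : Fin r → Finset β) (G : Finset β),
      (Finset.univ.filter fun j => f j ⊆ G).card
        = ∑ G' ∈ G.powerset, (Finset.univ.filter fun j => f j = G').card := by
    intro f G
    rw [Finset.card_eq_sum_card_fiberwise
      (f := fun j => f j) (t := G.powerset)
      (fun j hj => Finset.mem_powerset.mpr (Finset.mem_filter.mp hj).2)]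
    apply Finset.sum_congr rfl
    intro G' hG'
    congr 1
    ext j
    simp only [Finset.mem_filter, Finset.mem_univ, true_and]
    constructor
    · rintro ⟨_, h2⟩; exact h2
    · intro h2; exact ⟨h2 ▸ Finset.mem_powerset.mp hG', h2⟩
  intro G
  induction G using Finset.strongInduction with
  | _ G ih =>
    have h1 := split f G
    have h2 := split g G
    have hGp : G ∈ G.powerset := Finset.mem_powerset.mpr (Finset.Subset.refl _)
    rw [← Finset.add_sum_erase _ _ hGp] at h1 h2
    have hsum : ∑ G' ∈ G.powerset.erase G, (Finset.univ.filter fun j => f j = G').card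
        = ∑ G' ∈ G.powerset.erase G, (Finset.univ.filter fun j => g j = G').card := by
      apply Finset.sum_congr rfl
      intro G' hG'
      rw [Finset.mem_erase, Finset.mem_powerset] at hG'
      exact ih G' (lt_of_le_of_ne hG'.2 hG'.1)
    have := h G
    omega

/-- equal fiber counts give a permutation carrying one labelling to the other -/
lemma exists_perm_of_fiber_counts {β : Type*} (f g : Fin r → β)
    (h : ∀ b, Nat.card {x : Fin r // f x = b} = Nat.card {x : Fin r // g x = b}) :
    ∃ σ : Equiv.Perm (Fin r), ∀ j, g (σ j) = f j := by
  classical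
  have e : ∀ b, {x : Fin r // f x = b} ≃ {x : Fin r // g x = b} := fun b =>
    Fintype.equivOfCardEq (by
      rw [← Nat.card_eq_fintype_card, ← Nat.card_eq_fintype_card]; exact h b)
  refine ⟨(Equiv.sigmaFiberEquiv f).symm.trans
    ((Equiv.sigmaCongrRight e).trans (Equiv.sigmaFiberEquiv g)), fun j => ?_⟩
  exact (e (f j) ⟨j, rfl⟩).2

/-- type inclusion forces set inclusion into a maximal presentation -/
lemma subset_max_of_typ_subset {Astar B : Fin r → Set α} (hP : Pres A Astar)
    (hmax : ∀ i x, x ∉ Astar i →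
      ¬ Pres A (fun k => if k = i then insert x (Astar i) else Astar k))
    (hB : Pres A B) {i j : Fin r} (h : typ A B j ⊆ typ A Astar i) : B j ⊆ Astar i := by
  intro x hx
  by_contra hxA
  obtain ⟨Q, hQ, hxQ, hiNB⟩ := circuit_of_not_mem_max hP hmax hxA
  have hQt : Q ∈ typ A B j := by
    rw [typ, Finset.mem_filter]
    exact ⟨mem_circuitsF.mpr hQ, x, hxQ, hx⟩
  have := h hQt
  rw [typ, Finset.mem_filter] at this
  obtain ⟨_, y, hyQ, hyA⟩ := this
  exact hiNB (mem_NB.mpr ⟨y, hyQ, hyA⟩)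

end TvP

set_option maxHeartbeats 2000000 in
/-- Every transversal matroid of rank `r` has a maximal `r`-presentation dominating all of its
`r`-presentations: there is a family `A*` of `r` subsets with the same partial transversals as
`A` such that every family `B` of `r` subsets with the same partial transversals as `A`
satisfies `B (σ i) ⊆ A* i` for all `i`, for some permutation `σ`. -/
theorem exists_maximal_r_presentation
    {α : Type*} [Fintype α] (r : ℕ) (A : Fin r → Set α)
    (hex : ∃ B : Finset α, IsPartialTransversal A B ∧ B.card = r)
    (hub : ∀ S : Finset α, IsPartialTransversal A S → S.card ≤ r) :
    ∃ Astar : Fin r → Set α,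
      (∀ S : Finset α, IsPartialTransversal Astar S ↔ IsPartialTransversal A S) ∧
      ∀ B : Fin r → Set α,
        (∀ S : Finset α, IsPartialTransversal B S ↔ IsPartialTransversal A S) →
        ∃ σ : Equiv.Perm (Fin r), ∀ i : Fin r, B (σ i) ⊆ Astar i := by
  classical
  rcases Nat.eq_zero_or_pos r with hr | hr
  · refine ⟨A, fun S => Iff.rfl, fun B hB => ⟨Equiv.refl _, fun i => ?_⟩⟩
    exact absurd i.isLt (by omega)
  · haveI : NeZero r := ⟨hr.ne'⟩
    obtain ⟨Astar, hP, hmax⟩ := TvP.exists_max_pres A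
    refine ⟨Astar, ?_, ?_⟩
    · intro S
      rw [← TvP.PT_iff, ← TvP.PT_iff]
      exact hP S
    · intro B hBiff
      have hB : TvP.Pres A B := by
        intro S
        rw [TvP.PT_iff, TvP.PT_iff]
        exact hBiff S
      have hfib := TvP.count_eq_of_downsets (TvP.typ A B) (TvP.typ A Astar)
        (fun G => TvP.count_typ_subset_eq hB hP G)
      obtain ⟨σ, hσ⟩ := TvP.exists_perm_of_fiber_counts (TvP.typ A B) (TvP.typ A Astar) hfib
      refine ⟨σ.symm, fun i => ?_⟩
      apply TvP.subset_max_of_typ_subset hP hmax hB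
      have := hσ (σ.symm i)
      rw [Equiv.apply_symm_apply] at this
      rw [this]
end

section
/- Let E be a finite set, let 𝒜 = (A_1, …, A_r) be a family of r subsets of E whose rank (maximum cardinality of a partial transversal) is r, fix i ∈ {1, …, r}, and let C be the set of all elements e ∈ E ∖ A_i that belong to every maximum-cardinality partial transversal of 𝒜 contained in E ∖ A_i (the set of coloops of M[𝒜] ∖ A_i). Then the family (A_1, …, A_{i-1}, A_i ∪ C, A_{i+1}, …, A_r) has exactly the same partial transversals as 𝒜. -/
private lemma pathLemma {α : Type*} [DecidableEq α] {r : ℕ} (A : Fin r → Set α) (i : Fin r)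
    (g : α → Fin r) (W : Finset α) (hh : α → Fin r)
    (hginj : Set.InjOn g W) (hgmem : ∀ w ∈ W, w ∈ A (g w)) (hgavoid : ∀ w ∈ W, w ∉ A i) :
    ∀ (n : ℕ) (D : Finset α) (N : Finset (Fin r)) (y : α),
      D.card = n →
      (∀ d ∈ D, hh d ∈ N) → Set.InjOn hh D → (∀ j ∈ N, ∃ d ∈ D, hh d = j) →
      (∀ d ∈ D, d ∈ A (hh d)) → (∀ d ∈ D, d ∉ A i) →
      y ∈ W → y ∉ D → g y ∈ N → (∀ d ∈ D, d ∈ W → g d ∈ N) →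
      ∃ (W' : Finset α) (g' : α → Fin r),
        W'.card = W.card ∧ y ∉ W' ∧ (∀ w ∈ W', w ∉ A i) ∧
        Set.InjOn g' W' ∧ (∀ w ∈ W', w ∈ A (g' w)) ∧
        (∀ w ∈ W', w ∈ W → w ∉ D → g' w = g w) ∧
        (∀ w ∈ W, w ≠ y → w ∉ D → w ∈ W') := by
  intro n
  induction n with
  | zero =>
    intro D N y hcard hhN hhinj hhsurj hhmem hhavoid hyW hyD hgyN hinv
    obtain ⟨d, hd, _⟩ := hhsurj (g y) hgyN
    rw [Finset.card_eq_zero] at hcard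
    simp [hcard] at hd
  | succ n IH =>
    intro D N y hcard hhN hhinj hhsurj hhmem hhavoid hyW hyD hgyN hinv
    obtain ⟨x, hxD, hx⟩ := hhsurj (g y) hgyN
    have hxy : x ≠ y := fun h => hyD (h ▸ hxD)
    have key : ∃ (W'' : Finset α) (g'' : α → Fin r),
        W''.card = W.card ∧ x ∉ W'' ∧ (∀ w ∈ W'', w ∉ A i) ∧
        Set.InjOn g'' W'' ∧ (∀ w ∈ W'', w ∈ A (g'' w)) ∧
        (∀ w ∈ W'', w ∈ W → w ∉ D → g'' w = g w) ∧
        (∀ w ∈ W, w ≠ x → w ∉ D → w ∈ W'') := by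
      by_cases hxW : x ∈ W
      · have hcard' : (D.erase x).card = n := by
          rw [Finset.card_erase_of_mem hxD, hcard]; omega
        obtain ⟨W'', g'', h1, h2, h3, h4, h5, h6, h7⟩ :=
          IH (D.erase x) (N.erase (g y)) x hcard'
            (fun d hd => Finset.mem_erase.mpr
              ⟨fun hEq => (Finset.mem_erase.mp hd).1
                (hhinj (Finset.mem_coe.mpr (Finset.mem_of_mem_erase hd))
                  (Finset.mem_coe.mpr hxD) (hEq.trans hx.symm)),
               hhN d (Finset.mem_of_mem_erase hd)⟩)
            (hhinj.mono (fun a ha => Finset.mem_coe.mpr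
              (Finset.mem_of_mem_erase (Finset.mem_coe.mp ha))))
            (fun j hj => by
              obtain ⟨hjne, hjN⟩ := Finset.mem_erase.mp hj
              obtain ⟨d, hdD, hdj⟩ := hhsurj j hjN
              exact ⟨d, Finset.mem_erase.mpr
                ⟨fun h => hjne (by rw [← hdj, h, hx]), hdD⟩, hdj⟩)
            (fun d hd => hhmem d (Finset.mem_of_mem_erase hd))
            (fun d hd => hhavoid d (Finset.mem_of_mem_erase hd))
            hxW (Finset.notMem_erase x D)
            (Finset.mem_erase.mpr
              ⟨fun h => hxy (hginj (Finset.mem_coe.mpr hxW) (Finset.mem_coe.mpr hyW) h),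
               hinv x hxD hxW⟩)
            (fun d hd hdW => Finset.mem_erase.mpr
              ⟨fun h => hyD ((hginj (Finset.mem_coe.mpr hdW) (Finset.mem_coe.mpr hyW) h) ▸
                (Finset.mem_of_mem_erase hd)),
               hinv d (Finset.mem_of_mem_erase hd) hdW⟩)
        exact ⟨W'', g'', h1, h2, h3, h4, h5,
          fun w hw hwW hwD => h6 w hw hwW (fun h => hwD (Finset.mem_of_mem_erase h)),
          fun w hwW hwx hwD => h7 w hwW hwx (fun h => hwD (Finset.mem_of_mem_erase h))⟩
      · exact ⟨W, g, rfl, hxW, hgavoid, hginj, hgmem, fun w _ _ _ => rfl,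
          fun w hw _ _ => hw⟩
    obtain ⟨W'', g'', hc, hxW'', hav, hinj'', hmem'', hcompat, hsup⟩ := key
    have hyW'' : y ∈ W'' := hsup y hyW (Ne.symm hxy) hyD
    have hg''y : g'' y = g y := hcompat y hyW'' hyW hyD
    refine ⟨insert x (W''.erase y), Function.update g'' x (g y), ?_, ?_, ?_, ?_, ?_, ?_, ?_⟩
    · rw [Finset.card_insert_of_notMem (fun h => hxW'' (Finset.mem_of_mem_erase h)),
        Finset.card_erase_of_mem hyW'']
      have h2 : 0 < W''.card := Finset.card_pos.mpr ⟨y, hyW''⟩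
      omega
    · intro h
      rcases Finset.mem_insert.mp h with h | h
      · exact hxy h.symm
      · exact (Finset.notMem_erase y W'') h
    · intro w hw
      rcases Finset.mem_insert.mp hw with rfl | hw
      · exact hhavoid w hxD
      · exact hav w (Finset.mem_of_mem_erase hw)
    · intro a ha b hb hab
      rw [Finset.mem_coe, Finset.mem_insert] at ha hb
      by_cases hax : a = x <;> by_cases hbx : b = x
      · rw [hax, hbx]
      · exfalso
        rw [hax, Function.update_self, Function.update_of_ne hbx] at hab
        have hb' : b ∈ W''.erase y := hb.resolve_left hbx
        have : b = y := hinj'' (Finset.mem_coe.mpr (Finset.mem_of_mem_erase hb'))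
          (Finset.mem_coe.mpr hyW'') (by rw [hab.symm, hg''y])
        exact (Finset.mem_erase.mp hb').1 this
      · exfalso
        rw [hbx, Function.update_self, Function.update_of_ne hax] at hab
        have ha' : a ∈ W''.erase y := ha.resolve_left hax
        have : a = y := hinj'' (Finset.mem_coe.mpr (Finset.mem_of_mem_erase ha'))
          (Finset.mem_coe.mpr hyW'') (by rw [hab, hg''y])
        exact (Finset.mem_erase.mp ha').1 this
      · rw [Function.update_of_ne hax, Function.update_of_ne hbx] at hab
        exact hinj''
          (Finset.mem_coe.mpr (Finset.mem_of_mem_erase (ha.resolve_left hax)))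
          (Finset.mem_coe.mpr (Finset.mem_of_mem_erase (hb.resolve_left hbx))) hab
    · intro w hw
      rcases Finset.mem_insert.mp hw with rfl | hw
      · rw [Function.update_self, ← hx]
        exact hhmem w hxD
      · have hwx : w ≠ x := fun h => hxW'' (h ▸ Finset.mem_of_mem_erase hw)
        rw [Function.update_of_ne hwx]
        exact hmem'' w (Finset.mem_of_mem_erase hw)
    · intro w hw hwW hwD
      have hwx : w ≠ x := fun h => hwD (h ▸ hxD)
      rw [Function.update_of_ne hwx]
      have hw'' : w ∈ W''.erase y := (Finset.mem_insert.mp hw).resolve_left hwx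
      exact hcompat w (Finset.mem_of_mem_erase hw'') hwW hwD
    · intro w hwW hwy hwD
      have hwx : w ≠ x := fun h => hwD (h ▸ hxD)
      exact Finset.mem_insert.mpr (Or.inr (Finset.mem_erase.mpr ⟨hwy, hsup w hwW hwx hwD⟩))


/-- Let `A` be a family of `r` subsets of a finite set of rank `r`, let `i ∈ {1, …, r}`, and
let `C` be the set of elements of `E \ A i` lying in every maximum-cardinality partial
transversal of `A` contained in `E \ A i` (the coloops of `M[A] \ A i`). Then the family
obtained by replacing `A i` with `A i ∪ C` has exactly the same partial transversals as `A`. -/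
theorem coloop_set_extension_same_partial_transversals
    {α : Type*} [Fintype α] (r : ℕ) (A : Fin r → Set α)
    (hex : ∃ B : Finset α, IsPartialTransversal A B ∧ B.card = r)
    (hub : ∀ S : Finset α, IsPartialTransversal A S → S.card ≤ r)
    (i : Fin r) (C : Set α)
    (hC : C = {e : α | e ∉ A i ∧ ∀ S : Finset α, IsPartialTransversal A S →
      (∀ x ∈ S, x ∉ A i) →
      (∀ T : Finset α, IsPartialTransversal A T → (∀ x ∈ T, x ∉ A i) → T.card ≤ S.card) →
      e ∈ S}) :
    ∀ S : Finset α,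
      IsPartialTransversal (Function.update A i (A i ∪ C)) S ↔
        IsPartialTransversal A S := by
  classical
  subst hC
  intro S
  constructor
  · rintro ⟨f, hfinj, hfmem⟩
    by_cases hcase : ∃ s, f s = i ∧ (s : α) ∉ A i
    · obtain ⟨s₀, hfs₀, hs₀i⟩ := hcase
      have hs₀mem := hfmem s₀
      rw [hfs₀, Function.update_self] at hs₀mem
      have hs₀C := Or.resolve_left hs₀mem hs₀i
      have hs₀all := hs₀C.2
      set t : {x // x ∈ S} → Finset (Fin r) :=
        fun s => Finset.univ.filter (fun j => (s : α) ∈ A j) with ht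
      suffices hhall : ∀ X : Finset {x // x ∈ S}, X.card ≤ (X.biUnion t).card by
        obtain ⟨f', hinj', hmem'⟩ :=
          (Finset.all_card_le_biUnion_card_iff_exists_injective t).mp hhall
        refine ⟨f', hinj', fun s => ?_⟩
        have := hmem' s
        simp only [ht, Finset.mem_filter] at this
        exact this.2
      by_contra hXexists
      push_neg at hXexists
      obtain ⟨X, hXlt⟩ := hXexists
      set N := X.biUnion t with hN
      have htN : ∀ x ∈ X, ∀ j : Fin r, (x : α) ∈ A j → j ∈ N :=
        fun x hx j hj => Finset.mem_biUnion.mpr ⟨x, hx, by simp [ht, hj]⟩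
      have keymem : ∀ x, x ≠ s₀ → (x : α) ∈ A (f x) := by
        intro x hne
        have := hfmem x
        rwa [Function.update_of_ne (fun h => hne (hfinj (h.trans hfs₀.symm)))] at this
      have hs₀X : s₀ ∈ X := by
        by_contra hs₀X
        have : X.card ≤ N.card :=
          Finset.card_le_card_of_injOn f
            (fun x hx => htN x hx _ (keymem x (fun h => hs₀X (h ▸ hx))))
            (fun a _ b _ h => hfinj h)
        omega
      set D := X.erase s₀ with hD
      have hDsub : D ⊆ X := Finset.erase_subset _ _
      have hfD : ∀ x ∈ D, (x : α) ∈ A (f x) :=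
        fun x hx => keymem x (Finset.mem_erase.mp hx).1
      have hfDN : ∀ x ∈ D, f x ∈ N := fun x hx => htN x (hDsub hx) _ (hfD x hx)
      have hDcard : D.card = X.card - 1 := Finset.card_erase_of_mem hs₀X
      have himgsub : D.image f ⊆ N := by
        intro j hj
        obtain ⟨x, hx, rfl⟩ := Finset.mem_image.mp hj
        exact hfDN x hx
      have himgcard : (D.image f).card = D.card :=
        Finset.card_image_of_injOn (fun a _ b _ h => hfinj h)
      have hXpos : 0 < X.card := Finset.card_pos.mpr ⟨s₀, hs₀X⟩
      have himg : D.image f = N :=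
        Finset.eq_of_subset_of_card_le himgsub (by omega)
      have hXi : ∀ x ∈ X, (x : α) ∉ A i := by
        intro x hx hxi
        have hiN : i ∈ N := htN x hx i hxi
        rw [← himg] at hiN
        obtain ⟨d, hd, hdi⟩ := Finset.mem_image.mp hiN
        exact (Finset.mem_erase.mp hd).1 (hfinj (hdi.trans hfs₀.symm))
      -- a maximum-cardinality partial transversal avoiding `A i`
      set 𝒯 : Finset (Finset α) :=
        Finset.univ.filter (fun T => IsPartialTransversal A T ∧ ∀ x ∈ T, x ∉ A i) with h𝒯
      have hemp : (∅ : Finset α) ∈ 𝒯 := by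
        rw [h𝒯, Finset.mem_filter]
        refine ⟨Finset.mem_univ _,
          ⟨fun s => (Finset.notMem_empty _ s.2).elim,
           fun a b _ => (Finset.notMem_empty _ a.2).elim,
           fun s => (Finset.notMem_empty _ s.2).elim⟩,
          fun x hx => absurd hx (Finset.notMem_empty x)⟩
      obtain ⟨W, hW𝒯, hWmax'⟩ := Finset.exists_max_image 𝒯 Finset.card ⟨∅, hemp⟩
      obtain ⟨hWtrans, hWavoid⟩ := (Finset.mem_filter.mp hW𝒯).2
      have hWmax : ∀ T : Finset α, IsPartialTransversal A T →
          (∀ x ∈ T, x ∉ A i) → T.card ≤ W.card :=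
        fun T h1 h2 => hWmax' T (Finset.mem_filter.mpr ⟨Finset.mem_univ _, h1, h2⟩)
      obtain ⟨gW, hgWinj, hgWmem⟩ := hWtrans
      set g : α → Fin r := fun w => if h : w ∈ W then gW ⟨w, h⟩ else i with hg
      have hgWeq : ∀ w (h : w ∈ W), g w = gW ⟨w, h⟩ := fun w h => dif_pos h
      have hginj : Set.InjOn g W := by
        intro a ha b hb hab
        rw [Finset.mem_coe] at ha hb
        rw [hgWeq a ha, hgWeq b hb] at hab
        exact congrArg Subtype.val (hgWinj hab)
      have hgmem : ∀ w ∈ W, w ∈ A (g w) := fun w h => by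
        rw [hgWeq w h]; exact hgWmem ⟨w, h⟩
      set hh : α → Fin r := fun e => if h : e ∈ S then f ⟨e, h⟩ else i with hhdef
      have hhS : ∀ (x : {x // x ∈ S}), hh ↑x = f x := by
        intro x
        simp only [hhdef]
        rw [dif_pos x.2]
      set Dα : Finset α := D.image (fun x : {x // x ∈ S} => (x : α)) with hDα
      have hs₀W : (s₀ : α) ∈ W := hs₀all W ⟨gW, hgWinj, hgWmem⟩ hWavoid hWmax
      obtain ⟨W', g', hc', hs₀W', hav', hinj', hmem', -, -⟩ :=
        pathLemma A i g W hh hginj hgmem hWavoid Dα.card Dα N (↑s₀) rfl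
          (by
            intro d hd
            obtain ⟨x, hx, rfl⟩ := Finset.mem_image.mp hd
            rw [hhS x]; exact hfDN x hx)
          (by
            intro a ha b hb hab
            rw [Finset.mem_coe] at ha hb
            obtain ⟨xa, hxa, rfl⟩ := Finset.mem_image.mp ha
            obtain ⟨xb, hxb, rfl⟩ := Finset.mem_image.mp hb
            rw [hhS xa, hhS xb] at hab
            exact congrArg Subtype.val (hfinj hab))
          (by
            intro j hj
            rw [← himg] at hj
            obtain ⟨x, hx, rfl⟩ := Finset.mem_image.mp hj
            exact ⟨↑x, Finset.mem_image.mpr ⟨x, hx, rfl⟩, hhS x⟩)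
          (by
            intro d hd
            obtain ⟨x, hx, rfl⟩ := Finset.mem_image.mp hd
            rw [hhS x]; exact hfD x hx)
          (by
            intro d hd
            obtain ⟨x, hx, rfl⟩ := Finset.mem_image.mp hd
            exact hXi x (hDsub hx))
          hs₀W
          (by
            intro h
            obtain ⟨x, hx, hxe⟩ := Finset.mem_image.mp h
            exact (Finset.mem_erase.mp hx).1 (Subtype.ext hxe))
          (htN s₀ hs₀X _ (hgmem _ hs₀W))
          (by
            intro d hd hdW
            obtain ⟨x, hx, rfl⟩ := Finset.mem_image.mp hd
            exact htN x (hDsub hx) _ (hgmem _ hdW))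
      have hW'trans : IsPartialTransversal A W' :=
        ⟨fun w => g' ↑w,
         fun a b hab => Subtype.ext
           (hinj' (Finset.mem_coe.mpr a.2) (Finset.mem_coe.mpr b.2) hab),
         fun w => hmem' ↑w w.2⟩
      have : (s₀ : α) ∈ W' :=
        hs₀all W' hW'trans hav' (fun T h1 h2 => hc' ▸ hWmax T h1 h2)
      exact hs₀W' this
    · push_neg at hcase
      refine ⟨f, hfinj, fun s => ?_⟩
      by_cases h : f s = i
      · rw [h]; exact hcase s h
      · have := hfmem s
        rwa [Function.update_of_ne h] at this
  · rintro ⟨f, hfinj, hfmem⟩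
    refine ⟨f, hfinj, fun s => ?_⟩
    by_cases h : f s = i
    · rw [h, Function.update_self]
      exact Set.mem_union_left _ (h ▸ hfmem s)
    · rw [Function.update_of_ne h]
      exact hfmem s
end

section
/- Let E be a finite set and let 𝒜 = (A_1, …, A_r) be a family of r subsets of E whose rank (maximum cardinality of a partial transversal) is r. Then 𝒜 is a maximal r-presentation if and only if for every i ∈ {1, …, r} there is no element e ∈ E ∖ A_i that belongs to every maximum-cardinality partial transversal of 𝒜 contained in E ∖ A_i (i.e., if and only if for every i the deletion M[𝒜] ∖ A_i has no coloops). -/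
open Classical in
noncomputable def nbr {α : Type*} {r : ℕ} (A : Fin r → Set α) (X : Finset α) : Finset (Fin r) :=
  Finset.univ.filter (fun j => ∃ x ∈ X, x ∈ A j)

lemma mem_nbr {α : Type*} {r : ℕ} {A : Fin r → Set α} {X : Finset α} {j : Fin r} :
    j ∈ nbr A X ↔ ∃ x ∈ X, x ∈ A j := by
  classical simp [nbr]

lemma nbr_mono {α : Type*} {r : ℕ} {A : Fin r → Set α} {X Y : Finset α} (h : X ⊆ Y) :
    nbr A X ⊆ nbr A Y := by
  intro j hj
  rw [mem_nbr] at *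
  obtain ⟨x, hx, hxa⟩ := hj
  exact ⟨x, h hx, hxa⟩

lemma nbr_union {α : Type*} {r : ℕ} {A : Fin r → Set α} {X Y : Finset α} [DecidableEq α] :
    nbr A (X ∪ Y) = nbr A X ∪ nbr A Y := by
  ext j
  simp only [mem_nbr, Finset.mem_union]
  constructor
  · rintro ⟨x, hx | hx, hxa⟩
    · exact Or.inl ⟨x, hx, hxa⟩
    · exact Or.inr ⟨x, hx, hxa⟩
  · rintro (⟨x, hx, hxa⟩ | ⟨x, hx, hxa⟩)
    · exact ⟨x, Or.inl hx, hxa⟩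
    · exact ⟨x, Or.inr hx, hxa⟩

lemma transversal_subset {α ι : Type*} {A : ι → Set α} {S T : Finset α}
    (hS : IsPartialTransversal A S) (hTS : T ⊆ S) : IsPartialTransversal A T := by
  obtain ⟨f, hinj, hmem⟩ := hS
  refine ⟨fun t => f ⟨t, hTS t.2⟩, ?_, fun t => hmem ⟨t, hTS t.2⟩⟩
  intro a b hab
  have h2 : f ⟨(a:α), hTS a.2⟩ = f ⟨(b:α), hTS b.2⟩ := hab
  have h3 := hinj h2
  have h4 := congrArg Subtype.val h3
  exact Subtype.ext h4

lemma transversal_empty {α : Type*} {r : ℕ} (A : Fin r → Set α) :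
    IsPartialTransversal A (∅ : Finset α) := by
  refine ⟨fun x => absurd x.2 (Finset.notMem_empty _), ?_, ?_⟩
  · intro a; exact absurd a.2 (Finset.notMem_empty _)
  · intro s; exact absurd s.2 (Finset.notMem_empty _)

lemma hall_card {α : Type*} {r : ℕ} {A : Fin r → Set α} {S X : Finset α}
    (hS : IsPartialTransversal A S) (hXS : X ⊆ S) : X.card ≤ (nbr A X).card := by
  obtain ⟨f, hinj, hmem⟩ := hS
  have key : Fintype.card X ≤ Fintype.card (nbr A X) := by
    apply Fintype.card_le_of_injective
      (fun x => (⟨f ⟨x.1, hXS x.2⟩, mem_nbr.2 ⟨x.1, x.2, hmem ⟨x.1, hXS x.2⟩⟩⟩ :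
        (nbr A X : Finset (Fin r))))
    intro a b hab
    have : f ⟨a.1, hXS a.2⟩ = f ⟨b.1, hXS b.2⟩ := congrArg Subtype.val hab
    have h3 := hinj this
    have h4 := congrArg Subtype.val h3
    exact Subtype.ext h4
  simpa [Fintype.card_coe] using key

lemma hall_iff {α : Type*} {r : ℕ} {A : Fin r → Set α} {S : Finset α} :
    IsPartialTransversal A S ↔ ∀ X ⊆ S, X.card ≤ (nbr A X).card := by
  classical
  constructor
  · intro hS X hXS; exact hall_card hS hXS
  · intro h
    have := (Finset.all_card_le_biUnion_card_iff_exists_injective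
      (fun x : S => nbr A {(x : α)})).1 ?_
    · obtain ⟨f, hinj, hf⟩ := this
      refine ⟨f, hinj, fun s => ?_⟩
      have := mem_nbr.1 (hf s)
      obtain ⟨y, hy, hya⟩ := this
      rw [Finset.mem_singleton] at hy
      rwa [hy] at hya
    · intro s
      have hcard : s.card = (s.image (Subtype.val)).card :=
        (Finset.card_image_of_injective s Subtype.val_injective).symm
      have hsub : s.image Subtype.val ⊆ S := by
        intro x hx
        obtain ⟨y, _, rfl⟩ := Finset.mem_image.1 hx
        exact y.2
      have heq : s.biUnion (fun x : S => nbr A {(x : α)}) = nbr A (s.image Subtype.val) := by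
        ext j
        simp only [Finset.mem_biUnion, mem_nbr, Finset.mem_image, Finset.mem_singleton]
        aesop
      rw [heq, hcard]
      exact h _ hsub

lemma transversal_aug {α : Type*} {r : ℕ} {A : Fin r → Set α} {I J : Finset α}
    [DecidableEq α]
    (hI : IsPartialTransversal A I) (hJ : IsPartialTransversal A J)
    (hcard : I.card < J.card) :
    ∃ x ∈ J, x ∉ I ∧ IsPartialTransversal A (insert x I) := by
  classical
  by_contra hno
  push_neg at hno
  -- For each x ∈ J \ I, choose a deficient set
  have hdef : ∀ x ∈ J \ I, ∃ X : Finset α,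
      X ⊆ insert x I ∧ x ∈ X ∧ (nbr A X).card + 1 ≤ X.card := by
    intro x hx
    rw [Finset.mem_sdiff] at hx
    have hnt := hno x hx.1 hx.2
    rw [hall_iff] at hnt
    push_neg at hnt
    obtain ⟨X, hXsub, hXc⟩ := hnt
    refine ⟨X, hXsub, ?_, hXc⟩
    by_contra hxX
    have hXI : X ⊆ I := by
      intro y hy
      rcases Finset.mem_insert.1 (hXsub hy) with h | h
      · exact absurd (h ▸ hy) hxX
      · exact h
    exact absurd (hall_card hI hXI) (by omega)
  set g : α → Finset α := fun x =>
    if hx : x ∈ J \ I then (hdef x hx).choose else ∅ with hg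
  have hgspec : ∀ x ∈ J \ I, g x ⊆ insert x I ∧ x ∈ g x ∧ (nbr A (g x)).card + 1 ≤ (g x).card := by
    intro x hx
    simp only [hg, dif_pos hx]
    exact (hdef x hx).choose_spec
  -- key supermodularity induction
  have key : ∀ F : Finset α, F ⊆ J \ I →
      (nbr A (F.biUnion g)).card + F.card ≤ (F.biUnion g).card ∧
      F.biUnion g ⊆ I ∪ F ∧ F ⊆ F.biUnion g := by
    intro F
    induction F using Finset.induction_on with
    | empty => intro _; simp [nbr]
    | @insert a F ha ih =>
      intro hsub
      have haJI : a ∈ J \ I := hsub (Finset.mem_insert_self a F)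
      have hFJI : F ⊆ J \ I := fun y hy => hsub (Finset.mem_insert_of_mem hy)
      obtain ⟨ihc, ihs, ihm⟩ := ih hFJI
      obtain ⟨hga, hag, hgc⟩ := hgspec a haJI
      set U := F.biUnion g with hU
      have hbU : (insert a F).biUnion g = g a ∪ U := Finset.biUnion_insert
      -- g a ∩ U ⊆ I
      have hint : g a ∩ U ⊆ I := by
        intro y hy
        rw [Finset.mem_inter] at hy
        have h1 := hga hy.1
        have h2 := ihs hy.2
        rcases Finset.mem_insert.1 h1 with h | h
        · subst h
          rcases Finset.mem_union.1 h2 with h' | h'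
          · exact h'
          · exact absurd h' ha
        · exact h
      have e3 : (g a ∩ U).card ≤ (nbr A (g a ∩ U)).card := hall_card hI hint
      have e1 : (g a ∪ U).card + (g a ∩ U).card = (g a).card + U.card :=
        Finset.card_union_add_card_inter _ _
      have e2 : (nbr A (g a ∪ U)).card + (nbr A (g a) ∩ nbr A U).card
          = (nbr A (g a)).card + (nbr A U).card := by
        rw [nbr_union]; exact Finset.card_union_add_card_inter _ _
      have e4 : (nbr A (g a ∩ U)).card ≤ (nbr A (g a) ∩ nbr A U).card := by
        apply Finset.card_le_card
        intro j hj
        rw [Finset.mem_inter]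
        exact ⟨nbr_mono Finset.inter_subset_left hj, nbr_mono Finset.inter_subset_right hj⟩
      refine ⟨?_, ?_, ?_⟩
      · rw [hbU, Finset.card_insert_of_notMem ha]
        omega
      · rw [hbU]
        intro y hy
        rcases Finset.mem_union.1 hy with h | h
        · rcases Finset.mem_insert.1 (hga h) with h' | h'
          · exact Finset.mem_union_right _ (h' ▸ Finset.mem_insert_self a F)
          · exact Finset.mem_union_left _ h'
        · rcases Finset.mem_union.1 (ihs h) with h' | h'
          · exact Finset.mem_union_left _ h'
          · exact Finset.mem_union_right _ (Finset.mem_insert_of_mem h')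
      · rw [hbU]
        intro y hy
        rcases Finset.mem_insert.1 hy with h | h
        · exact Finset.mem_union_left _ (h ▸ hag)
        · exact Finset.mem_union_right _ (ihm h)
  obtain ⟨kc, ks, km⟩ := key (J \ I) (le_refl _)
  set X := (J \ I).biUnion g with hX
  -- counting endgame
  have h1 : (J ∩ X).card ≤ (nbr A X).card :=
    le_trans (hall_card hJ Finset.inter_subset_left)
      (Finset.card_le_card (nbr_mono Finset.inter_subset_right))
  have h2 : X.card ≤ (X ∩ I).card + (J \ I).card := by
    have : X ⊆ (X ∩ I) ∪ (J \ I) := by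
      intro y hy
      rcases Finset.mem_union.1 (ks hy) with h | h
      · exact Finset.mem_union_left _ (Finset.mem_inter.2 ⟨hy, h⟩)
      · exact Finset.mem_union_right _ h
    exact le_trans (Finset.card_le_card this) (Finset.card_union_le _ _)
  have h3 : (J \ I).card + (J ∩ I ∩ X).card ≤ (J ∩ X).card := by
    have hdisj : Disjoint (J \ I) (J ∩ I ∩ X) := by
      apply Finset.disjoint_left.2
      intro y hy hy2
      exact (Finset.mem_sdiff.1 hy).2 (Finset.mem_inter.1 (Finset.mem_inter.1 hy2).1).2
    have hsub : (J \ I) ∪ (J ∩ I ∩ X) ⊆ J ∩ X := by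
      intro y hy
      rcases Finset.mem_union.1 hy with h | h
      · exact Finset.mem_inter.2 ⟨(Finset.mem_sdiff.1 h).1, km h⟩
      · exact Finset.mem_inter.2 ⟨(Finset.mem_inter.1 (Finset.mem_inter.1 h).1).1,
          (Finset.mem_inter.1 h).2⟩
    calc (J \ I).card + (J ∩ I ∩ X).card = ((J \ I) ∪ (J ∩ I ∩ X)).card :=
          (Finset.card_union_of_disjoint hdisj).symm
      _ ≤ (J ∩ X).card := Finset.card_le_card hsub
  have h4 : (X ∩ I).card ≤ (J ∩ I ∩ X).card + (I \ J).card := by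
    have : X ∩ I ⊆ (J ∩ I ∩ X) ∪ (I \ J) := by
      intro y hy
      rw [Finset.mem_inter] at hy
      by_cases hyJ : y ∈ J
      · exact Finset.mem_union_left _
          (Finset.mem_inter.2 ⟨Finset.mem_inter.2 ⟨hyJ, hy.2⟩, hy.1⟩)
      · exact Finset.mem_union_right _ (Finset.mem_sdiff.2 ⟨hy.2, hyJ⟩)
    exact le_trans (Finset.card_le_card this) (Finset.card_union_le _ _)
  have h5 : (J \ I).card + (J ∩ I).card = J.card := by
    rw [Finset.card_sdiff_add_card_inter]
  have h6 : (I \ J).card + (I ∩ J).card = I.card := by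
    rw [Finset.card_sdiff_add_card_inter]
  have h7 : (J ∩ I ∩ X).card ≤ (J ∩ I).card :=
    Finset.card_le_card Finset.inter_subset_left
  have h8 : (J ∩ I).card = (I ∩ J).card := by rw [Finset.inter_comm]
  omega

lemma exists_max_avoiding {α : Type*} [Fintype α] {r : ℕ} (A : Fin r → Set α) (i : Fin r) :
    ∃ S : Finset α, IsPartialTransversal A S ∧ (∀ x ∈ S, x ∉ A i) ∧
      ∀ T : Finset α, IsPartialTransversal A T → (∀ x ∈ T, x ∉ A i) → T.card ≤ S.card := by
  classical
  set s : Finset (Finset α) :=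
    Finset.univ.filter (fun S => IsPartialTransversal A S ∧ ∀ x ∈ S, x ∉ A i) with hs
  have hne : s.Nonempty := by
    refine ⟨∅, ?_⟩
    simp only [hs, Finset.mem_filter, Finset.mem_univ, true_and]
    exact ⟨transversal_empty A, fun x hx => absurd hx (Finset.notMem_empty _)⟩
  obtain ⟨S, hSs, hSmax⟩ := Finset.exists_max_image s Finset.card hne
  simp only [hs, Finset.mem_filter, Finset.mem_univ, true_and] at hSs
  refine ⟨S, hSs.1, hSs.2, fun T hT hTa => ?_⟩
  apply hSmax
  simp only [hs, Finset.mem_filter, Finset.mem_univ, true_and]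
  exact ⟨hT, hTa⟩

-- key lemma for the forward direction
lemma key_insert {α : Type*} [Fintype α] [DecidableEq α] {r : ℕ} {A : Fin r → Set α} {i : Fin r} {e : α}
    (he : e ∉ A i)
    (hcol : ∀ S : Finset α, IsPartialTransversal A S → (∀ x ∈ S, x ∉ A i) →
      (∀ T : Finset α, IsPartialTransversal A T → (∀ x ∈ T, x ∉ A i) → T.card ≤ S.card) →
      e ∈ S)
    {S' : Finset α} (heS : e ∉ S')
    (hS' : ∃ g : S' → Fin r, Function.Injective g ∧ (∀ x : S', (x : α) ∈ A (g x)) ∧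
      ∀ x : S', g x ≠ i) :
    IsPartialTransversal A (insert e S') := by
  classical
  by_contra hno
  obtain ⟨g, hginj, hgmem, hgi⟩ := hS'
  have hS'trans : IsPartialTransversal A S' := ⟨g, hginj, hgmem⟩
  rw [hall_iff] at hno
  push_neg at hno
  obtain ⟨X, hXsub, hXc⟩ := hno
  have heX : e ∈ X := by
    by_contra heX
    have hXS' : X ⊆ S' := by
      intro y hy
      rcases Finset.mem_insert.1 (hXsub hy) with h | h
      · exact absurd (h ▸ hy) heX
      · exact h
    exact absurd (hall_card hS'trans hXS') (by omega)
  set X' := X.erase e with hX'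
  have hX'S' : X' ⊆ S' := by
    intro y hy
    have h1 := Finset.mem_of_mem_erase hy
    have h2 := Finset.ne_of_mem_erase hy
    rcases Finset.mem_insert.1 (hXsub h1) with h | h
    · exact absurd h h2
    · exact h
  have hX'card : X'.card + 1 = X.card := Finset.card_erase_add_one heX
  -- the injection from X' into nbr A X via g is bijective, hence i ∉ nbr A X
  have hinbr : i ∉ nbr A X := by
    set h : X' → (nbr A X : Finset (Fin r)) := fun x =>
      ⟨g ⟨x.1, hX'S' x.2⟩, mem_nbr.2 ⟨x.1, Finset.mem_of_mem_erase x.2,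
        hgmem ⟨x.1, hX'S' x.2⟩⟩⟩ with hh
    have hinj : Function.Injective h := by
      intro a b hab
      have h2 : g ⟨(a:α), hX'S' a.2⟩ = g ⟨(b:α), hX'S' b.2⟩ := congrArg Subtype.val hab
      have h3 := hginj h2
      have h4 := congrArg Subtype.val h3
      exact Subtype.ext h4
    have hcards : Fintype.card X' = Fintype.card (nbr A X) := by
      have hle := Fintype.card_le_of_injective h hinj
      have : (nbr A X).card ≤ X'.card := by omega
      simp only [Fintype.card_coe] at *
      omega
    have hbij : Function.Bijective h :=
      (Fintype.bijective_iff_injective_and_card h).2 ⟨hinj, hcards⟩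
    intro hiX
    obtain ⟨x, hx⟩ := hbij.2 ⟨i, hiX⟩
    have : g ⟨x.1, hX'S' x.2⟩ = i := congrArg Subtype.val hx
    exact hgi _ this
  have hXavoid : ∀ x ∈ X, x ∉ A i := by
    intro x hx hxa
    exact hinbr (mem_nbr.2 ⟨x, hx, hxa⟩)
  have hXnot : ¬ IsPartialTransversal A X := by
    intro hX
    exact absurd (hall_card hX (subset_refl X)) (by omega)
  have hX'trans : IsPartialTransversal A X' := transversal_subset hS'trans hX'S'
  have hX'avoid : ∀ x ∈ X', x ∉ A i := fun x hx => hXavoid x (Finset.mem_of_mem_erase hx)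
  have heX' : e ∉ X' := Finset.notMem_erase _ _
  obtain ⟨T, hTtrans, hTavoid, hTmax⟩ := exists_max_avoiding A i
  -- build by induction a maximum transversal avoiding A i and not containing e
  have build : ∀ n : ℕ, ∀ K : Finset α, IsPartialTransversal A K → K ⊆ X' ∪ T →
      X' ⊆ K → e ∉ K → T.card ≤ K.card + n →
      ∃ K' : Finset α, IsPartialTransversal A K' ∧ (∀ x ∈ K', x ∉ A i) ∧ e ∉ K' ∧
        T.card ≤ K'.card := by
    intro n
    induction n with
    | zero =>
      intro K hK hKsub hX'K heK hle
      refine ⟨K, hK, ?_, heK, by omega⟩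
      intro x hx
      rcases Finset.mem_union.1 (hKsub hx) with h | h
      · exact hX'avoid x h
      · exact hTavoid x h
    | succ n ihn =>
      intro K hK hKsub hX'K heK hle
      by_cases hc : T.card ≤ K.card
      · refine ⟨K, hK, ?_, heK, hc⟩
        intro x hx
        rcases Finset.mem_union.1 (hKsub hx) with h | h
        · exact hX'avoid x h
        · exact hTavoid x h
      · push_neg at hc
        obtain ⟨x, hxT, hxK, hxtrans⟩ := transversal_aug hK hTtrans hc
        have hxe : x ≠ e := by
          intro hxe'
          apply hXnot
          apply transversal_subset hxtrans
          intro y hy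
          by_cases hye : y = e
          · rw [hye, ← hxe']; exact Finset.mem_insert_self _ _
          · exact Finset.mem_insert_of_mem (hX'K (Finset.mem_erase.2 ⟨hye, hy⟩))
        refine ihn (insert x K) hxtrans ?_ ?_ ?_ ?_
        · intro y hy
          rcases Finset.mem_insert.1 hy with h | h
          · exact Finset.mem_union_right _ (h ▸ hxT)
          · exact hKsub h
        · exact hX'K.trans (Finset.subset_insert _ _)
        · intro hcon
          rcases Finset.mem_insert.1 hcon with h | h
          · exact hxe h.symm
          · exact heK h
        · rw [Finset.card_insert_of_notMem hxK]; omega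
  obtain ⟨K, hKtrans, hKavoid, heK, hKcard⟩ := build T.card X' hX'trans
    Finset.subset_union_left (subset_refl _) heX' (by omega)
  have hKmax : ∀ T' : Finset α, IsPartialTransversal A T' → (∀ x ∈ T', x ∉ A i) →
      T'.card ≤ K.card := fun T' h1 h2 => le_trans (hTmax T' h1 h2) hKcard
  exact heK (hcol K hKtrans hKavoid hKmax)

/-- A family `A` of `r` subsets of a finite set of rank `r` is a maximal `r`-presentation
(i.e. every family `B` of `r` subsets with the same partial transversals and `A i ⊆ B i` for
all `i` satisfies `B i = A i` for all `i`) if and only if for every `i` there is no element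
`e ∉ A i` belonging to every maximum-cardinality partial transversal of `A` contained in the
complement of `A i` (i.e. for every `i` the deletion `M[A] \ A i` has no coloops). -/
theorem maximal_presentation_iff_no_coloops
    {α : Type*} [Fintype α] (r : ℕ) (A : Fin r → Set α)
    (hex : ∃ B : Finset α, IsPartialTransversal A B ∧ B.card = r)
    (hub : ∀ S : Finset α, IsPartialTransversal A S → S.card ≤ r) :
    (∀ B : Fin r → Set α,
        (∀ S : Finset α, IsPartialTransversal B S ↔ IsPartialTransversal A S) →
        (∀ i, A i ⊆ B i) → ∀ i, B i = A i) ↔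
    (∀ i : Fin r, ¬ ∃ e : α, e ∉ A i ∧
      ∀ S : Finset α, IsPartialTransversal A S → (∀ x ∈ S, x ∉ A i) →
        (∀ T : Finset α, IsPartialTransversal A T → (∀ x ∈ T, x ∉ A i) → T.card ≤ S.card) →
        e ∈ S) := by
  classical
  constructor
  · -- maximality → no coloops
    intro hmax i
    rintro ⟨e, he, hcol⟩
    set B : Fin r → Set α := Function.update A i (A i ∪ {e}) with hB
    have hsub : ∀ j, A j ⊆ B j := by
      intro j
      by_cases hj : j = i
      · subst hj
        rw [hB, Function.update_self]
        exact Set.subset_union_left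
      · rw [hB, Function.update_of_ne hj]
    have hBi : B i = A i ∪ {e} := by rw [hB, Function.update_self]
    have hsame : ∀ S : Finset α, IsPartialTransversal B S ↔ IsPartialTransversal A S := by
      intro S
      constructor
      · rintro ⟨f, hinj, hmem⟩
        by_cases hall : ∀ s : S, (s : α) ∈ A (f s)
        · exact ⟨f, hinj, hall⟩
        · push_neg at hall
          obtain ⟨s₀, hs₀⟩ := hall
          have hfi : f s₀ = i := by
            by_contra hfi
            have h1 := hmem s₀
            rw [hB, Function.update_of_ne hfi] at h1
            exact hs₀ h1
          have hse : (s₀ : α) = e := by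
            have h1 := hmem s₀
            rw [hfi, hBi] at h1
            rcases h1 with h1 | h1
            · rw [hfi] at hs₀; exact absurd h1 hs₀
            · exact h1
          have heS : e ∈ S := hse ▸ s₀.2
          set S' := S.erase e with hS'
          set g : S' → Fin r := fun x => f ⟨x.1, Finset.mem_of_mem_erase x.2⟩ with hg
          have hgne : ∀ x : S', (⟨x.1, Finset.mem_of_mem_erase x.2⟩ : S) ≠ s₀ := by
            intro x hx
            exact Finset.ne_of_mem_erase x.2 (by rw [← hse]; exact congrArg Subtype.val hx)
          have hgi : ∀ x : S', g x ≠ i := by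
            intro x hgx
            apply hgne x
            apply hinj
            rw [hg] at hgx
            simp only at hgx
            rw [hgx, hfi]
          have hgmem : ∀ x : S', (x : α) ∈ A (g x) := by
            intro x
            have h1 := hmem ⟨x.1, Finset.mem_of_mem_erase x.2⟩
            rw [hB, Function.update_of_ne (hgi x)] at h1
            exact h1
          have hginj : Function.Injective g := by
            intro a b hab
            have h2 := hinj hab
            have h3 := congrArg Subtype.val h2
            exact Subtype.ext h3
          have hins : IsPartialTransversal A (insert e S') :=
            key_insert he hcol (Finset.notMem_erase _ _) ⟨g, hginj, hgmem, hgi⟩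
          rwa [hS', Finset.insert_erase heS] at hins
      · rintro ⟨f, hinj, hmem⟩
        exact ⟨f, hinj, fun s => hsub _ (hmem s)⟩
    have hcontra := hmax B hsame hsub i
    have heB : e ∈ B i := by
      rw [hBi]
      exact Set.mem_union_right _ rfl
    rw [hcontra] at heB
    exact he heB
  · -- no coloops → maximality
    intro hcond B hsame hsub i
    refine Set.Subset.antisymm ?_ (hsub i)
    intro e heB
    by_contra heA
    apply hcond i
    refine ⟨e, heA, ?_⟩
    intro S hS havoid hmaxS
    by_contra heS
    obtain ⟨f, hinj, hmem⟩ := hS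
    have hfi : ∀ s : S, f s ≠ i := by
      intro s hfs
      exact havoid s.1 s.2 (hfs ▸ hmem s)
    have hBtrans : IsPartialTransversal B (insert e S) := by
      refine ⟨fun x => if h : (x : α) ∈ S then f ⟨x.1, h⟩ else i, ?_, ?_⟩
      · intro a b hab
        by_cases ha : (a : α) ∈ S <;> by_cases hb : (b : α) ∈ S
        · simp only [dif_pos ha, dif_pos hb] at hab
          have h3 := hinj hab
          have h4 := congrArg Subtype.val h3
          exact Subtype.ext h4
        · simp only [dif_pos ha, dif_neg hb] at hab
          exact absurd hab (hfi _)
        · simp only [dif_neg ha, dif_pos hb] at hab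
          exact absurd hab.symm (hfi _)
        · have ha' : (a : α) = e := by
            rcases Finset.mem_insert.1 a.2 with h | h
            · exact h
            · exact absurd h ha
          have hb' : (b : α) = e := by
            rcases Finset.mem_insert.1 b.2 with h | h
            · exact h
            · exact absurd h hb
          exact Subtype.ext (ha'.trans hb'.symm)
      · intro x
        by_cases h : (x : α) ∈ S
        · simp only [dif_pos h]
          exact hsub _ (hmem ⟨x.1, h⟩)
        · simp only [dif_neg h]
          have hx' : (x : α) = e := by
            rcases Finset.mem_insert.1 x.2 with h1 | h1
            · exact h1
            · exact absurd h1 h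
          rw [hx']
          exact heB
    have hAtrans : IsPartialTransversal A (insert e S) := (hsame _).1 hBtrans
    have havoid' : ∀ x ∈ insert e S, x ∉ A i := by
      intro x hx
      rcases Finset.mem_insert.1 hx with h | h
      · exact h ▸ heA
      · exact havoid x h
    have hle := hmaxS (insert e S) hAtrans havoid'
    rw [Finset.card_insert_of_notMem heS] at hle
    omega
end

section
/- Every finite matroid of rank k that has no coloops has at least k + 1 distinct bases. -/
/-- Every finite matroid of rank `k` (i.e. all of whose bases have `k` elements) with no
coloops (no element belonging to every base) has at least `k + 1` distinct bases. -/
theorem card_bases_of_no_coloops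
    {α : Type*} (M : Matroid α) [M.Finite] (k : ℕ)
    (hrank : ∀ B : Set α, M.IsBase B → B.ncard = k)
    (hno : ∀ e ∈ M.E, ∃ B : Set α, M.IsBase B ∧ e ∉ B) :
    k + 1 ≤ {B : Set α | M.IsBase B}.ncard := by
  classical
  obtain ⟨B, hB⟩ := M.exists_isBase
  have hBfin : B.Finite := hB.finite
  -- for each e ∈ B choose an exchange
  have hch : ∀ e ∈ B, ∃ f, f ∉ B ∧ M.IsBase (insert f (B \ {e})) := by
    intro e he
    obtain ⟨B', hB', heB'⟩ := hno e (hB.subset_ground he)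
    obtain ⟨f, hf, hbase⟩ := hB.exchange hB' ⟨he, heB'⟩
    exact ⟨f, hf.2, hbase⟩
  choose! g hg using hch
  set C : α → Set α := fun e => insert (g e) (B \ {e}) with hC
  have hCmem : ∀ e ∈ B, e ∉ C e := by
    intro e he hmem
    rcases hmem with h | h
    · exact (hg e he).1 (h ▸ he)
    · exact h.2 rfl
  have hCmem' : ∀ e ∈ B, ∀ e' ∈ B, e ≠ e' → e ∈ C e' := by
    intro e he e' he' hne
    exact Or.inr ⟨he, hne⟩
  have hInj : Set.InjOn C B := by
    intro e he e' he' heq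
    by_contra hne
    exact hCmem e he (heq ▸ hCmem' e he e' he' hne)
  have hBnot : B ∉ C '' B := by
    rintro ⟨e, he, heq⟩
    exact hCmem e he (heq ▸ he)
  have hsub : insert B (C '' B) ⊆ {B : Set α | M.IsBase B} := by
    rintro X (rfl | ⟨e, he, rfl⟩)
    · exact hB
    · exact (hg e he).2
  have hfinBases : {B : Set α | M.IsBase B}.Finite := by
    apply M.ground_finite.finite_subsets.subset
    intro X hX
    exact hX.subset_ground
  calc k + 1 = (insert B (C '' B)).ncard := by
        rw [Set.ncard_insert_of_notMem hBnot (hBfin.image C),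
          Set.ncard_image_of_injOn hInj, hrank B hB]
    _ ≤ _ := Set.ncard_le_ncard hsub hfinBases
end

section
/- Let X be an n × 2 matrix with entries in {0, 1} and let (A_1, A_2) be the encoded family of subsets of {1, …, n}, A_j = {i : X_{ij} = 1}. Then (A_1, A_2) is a maximal 2-presentation if and only if all three of the following hold: (1) there exist distinct indices i, i' with X_{i,1} = 1 and X_{i',2} = 1 (equivalently, the maximum over injections φ : {1,2} → {1, …, n} of X_{φ(1),1} + X_{φ(2),2} equals 2); (2) the number of rows i with X_{i,2} = 1 and X_{i,1} = 0 is not equal to 1; and (3) the number of rows i with X_{i,1} = 1 and X_{i,2} = 0 is not equal to 1. -/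
/-- The family `A` of `r` subsets of `α` is a maximal `r`-presentation: it has rank `r`
(maximum cardinality of a partial transversal), and every family `B` of `r` subsets with the
same partial transversals and `A i ⊆ B i` for all `i` satisfies `B i = A i` for all `i`. -/
def IsMaximalPresentation {α : Type*} {r : ℕ} (A : Fin r → Set α) : Prop :=
  (∃ B : Finset α, IsPartialTransversal A B ∧ B.card = r) ∧
  (∀ S : Finset α, IsPartialTransversal A S → S.card ≤ r) ∧
  (∀ B : Fin r → Set α,
    (∀ S : Finset α, IsPartialTransversal B S ↔ IsPartialTransversal A S) →
    (∀ i, A i ⊆ B i) → ∀ i, B i = A i)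

section Aux

variable {α : Type*}

private lemma fin2_cases (j : Fin 2) : j = 0 ∨ j = 1 := by
  fin_cases j
  · exact Or.inl rfl
  · exact Or.inr rfl

lemma pt_card_le (A : Fin 2 → Set α) (S : Finset α)
    (h : IsPartialTransversal A S) : S.card ≤ 2 := by
  obtain ⟨f, hf, -⟩ := h
  have := Fintype.card_le_of_injective f hf
  simpa using this

lemma pt_mono {A B : Fin 2 → Set α} (h : ∀ i, A i ⊆ B i) {S : Finset α}
    (hS : IsPartialTransversal A S) : IsPartialTransversal B S := by
  obtain ⟨f, hf, hmem⟩ := hS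
  exact ⟨f, hf, fun s => h _ (hmem s)⟩

lemma pt_iff [DecidableEq α] (A : Fin 2 → Set α) (S : Finset α) :
    IsPartialTransversal A S ↔
      S = ∅ ∨ (∃ a, S = {a} ∧ (a ∈ A 0 ∨ a ∈ A 1)) ∨
        (∃ a b, a ≠ b ∧ S = ({a, b} : Finset α) ∧ a ∈ A 0 ∧ b ∈ A 1) := by
  constructor
  · intro h
    have hle := pt_card_le A S h
    obtain ⟨f, hf, hmem⟩ := h
    have hc : S.card = 0 ∨ S.card = 1 ∨ S.card = 2 := by omega
    rcases hc with h0 | h1 | h2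
    · exact Or.inl (Finset.card_eq_zero.mp h0)
    · obtain ⟨a, rfl⟩ := Finset.card_eq_one.mp h1
      refine Or.inr (Or.inl ⟨a, rfl, ?_⟩)
      have ha : a ∈ ({a} : Finset α) := Finset.mem_singleton_self a
      have hm := hmem ⟨a, ha⟩
      rcases fin2_cases (f ⟨a, ha⟩) with h0 | h0 <;> rw [h0] at hm
      · exact Or.inl hm
      · exact Or.inr hm
    · obtain ⟨a, b, hab, rfl⟩ := Finset.card_eq_two.mp h2
      have haS : a ∈ ({a, b} : Finset α) := by simp
      have hbS : b ∈ ({a, b} : Finset α) := by simp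
      have hne : f ⟨a, haS⟩ ≠ f ⟨b, hbS⟩ := fun h => hab (Subtype.mk_eq_mk.mp (hf h))
      rcases fin2_cases (f ⟨a, haS⟩) with h0 | h0
      · have h1 : f ⟨b, hbS⟩ = 1 := by
          rcases fin2_cases (f ⟨b, hbS⟩) with h | h
          · exact absurd (h0.trans h.symm) hne
          · exact h
        refine Or.inr (Or.inr ⟨a, b, hab, rfl, ?_, ?_⟩)
        · have := hmem ⟨a, haS⟩; rwa [h0] at this
        · have := hmem ⟨b, hbS⟩; rwa [h1] at this
      · have h1 : f ⟨b, hbS⟩ = 0 := by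
          rcases fin2_cases (f ⟨b, hbS⟩) with h | h
          · exact h
          · exact absurd (h0.trans h.symm) hne
        refine Or.inr (Or.inr ⟨b, a, hab.symm, Finset.pair_comm a b, ?_, ?_⟩)
        · have := hmem ⟨b, hbS⟩; rwa [h1] at this
        · have := hmem ⟨a, haS⟩; rwa [h0] at this
  · rintro (rfl | ⟨a, rfl, ha⟩ | ⟨a, b, hab, rfl, ha, hb⟩)
    · exact ⟨fun s => 0, fun s t _ => (Finset.notMem_empty _ s.2).elim,
        fun s => (Finset.notMem_empty _ s.2).elim⟩
    · rcases ha with h0 | h1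
      · refine ⟨fun _ => 0, ?_, ?_⟩
        · intro s t _
          apply Subtype.ext
          rw [Finset.mem_singleton.mp s.2, Finset.mem_singleton.mp t.2]
        · intro s
          have hs := Finset.mem_singleton.mp s.2
          rw [hs]; exact h0
      · refine ⟨fun _ => 1, ?_, ?_⟩
        · intro s t _
          apply Subtype.ext
          rw [Finset.mem_singleton.mp s.2, Finset.mem_singleton.mp t.2]
        · intro s
          have hs := Finset.mem_singleton.mp s.2
          rw [hs]; exact h1
    · refine ⟨fun s => if (s : α) = a then 0 else 1, ?_, ?_⟩
      · intro s t hst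
        have hst' : (if (s : α) = a then (0 : Fin 2) else 1) =
            (if (t : α) = a then (0 : Fin 2) else 1) := hst
        by_cases hs : (s : α) = a <;> by_cases ht : (t : α) = a
        · exact Subtype.ext (hs.trans ht.symm)
        · rw [if_pos hs, if_neg ht] at hst'; exact absurd hst' (by decide)
        · rw [if_neg hs, if_pos ht] at hst'; exact absurd hst' (by decide)
        · apply Subtype.ext
          have hs' : (s : α) = b := by
            have := s.2
            simp only [Finset.mem_insert, Finset.mem_singleton] at this
            tauto
          have ht' : (t : α) = b := by
            have := t.2
            simp only [Finset.mem_insert, Finset.mem_singleton] at this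
            tauto
          rw [hs', ht']
      · intro s
        show (s : α) ∈ A (if (s : α) = a then 0 else 1)
        by_cases hs : (s : α) = a
        · rw [if_pos hs, hs]; exact ha
        · rw [if_neg hs]
          have hs' : (s : α) = b := by
            have := s.2
            simp only [Finset.mem_insert, Finset.mem_singleton] at this
            tauto
          rw [hs']; exact hb

lemma rank_two_iff [DecidableEq α] (A : Fin 2 → Set α) :
    (∃ B : Finset α, IsPartialTransversal A B ∧ B.card = 2) ↔
      ∃ a b : α, a ≠ b ∧ a ∈ A 0 ∧ b ∈ A 1 := by
  constructor
  · rintro ⟨B, hB, hcard⟩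
    rcases (pt_iff A B).mp hB with rfl | ⟨a, rfl, _⟩ | ⟨a, b, hab, rfl, ha, hb⟩
    · simp at hcard
    · simp at hcard
    · exact ⟨a, b, hab, ha, hb⟩
  · rintro ⟨a, b, hab, ha, hb⟩
    exact ⟨{a, b}, (pt_iff A _).mpr (Or.inr (Or.inr ⟨a, b, hab, rfl, ha, hb⟩)),
      Finset.card_pair hab⟩

lemma key_subset0 [DecidableEq α] {A B : Fin 2 → Set α}
    (hA : (A 1 \ A 0).ncard ≠ 1)
    (hPT : ∀ S : Finset α, IsPartialTransversal B S ↔ IsPartialTransversal A S)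
    (hsub : ∀ i, A i ⊆ B i) : B 0 = A 0 := by
  refine Set.Subset.antisymm ?_ (hsub 0)
  intro x hxB
  by_contra hx0
  have hx1 : x ∈ A 1 := by
    have h1 : IsPartialTransversal B {x} :=
      (pt_iff B _).mpr (Or.inr (Or.inl ⟨x, rfl, Or.inl hxB⟩))
    rcases (pt_iff A _).mp ((hPT _).mp h1) with h | ⟨a, ha, hmem⟩ | ⟨a, b, hab, hS, _, _⟩
    · simp at h
    · have hax : a = x := by
        have : x ∈ ({a} : Finset α) := ha ▸ Finset.mem_singleton_self x
        exact (Finset.mem_singleton.mp this).symm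
      subst hax
      rcases hmem with h | h
      · exact absurd h hx0
      · exact h
    · have := congrArg Finset.card hS
      rw [Finset.card_singleton, Finset.card_pair hab] at this
      omega
  have hsub' : A 1 \ A 0 ⊆ {x} := by
    rintro t ⟨ht1, ht0⟩
    by_contra htx
    have htne : t ≠ x := fun h => htx (by simp [h])
    have hpt : IsPartialTransversal B {x, t} :=
      (pt_iff B _).mpr (Or.inr (Or.inr ⟨x, t, htne.symm, rfl, hxB, hsub 1 ht1⟩))
    rcases (pt_iff A _).mp ((hPT _).mp hpt) with h | ⟨a, ha, _⟩ | ⟨a, b, hab, hS, ha0, hb1⟩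
    · exact Finset.insert_ne_empty _ _ h
    · have := congrArg Finset.card ha
      rw [Finset.card_pair htne.symm, Finset.card_singleton] at this
      omega
    · have haxt : a = x ∨ a = t := by
        have : a ∈ ({x, t} : Finset α) := hS ▸ Finset.mem_insert_self a {b}
        simpa using this
      rcases haxt with rfl | rfl
      · exact hx0 ha0
      · exact ht0 ha0
  have hsing : A 1 \ A 0 = {x} :=
    Set.Subset.antisymm hsub' (Set.singleton_subset_iff.mpr ⟨hx1, hx0⟩)
  exact hA (hsing ▸ Set.ncard_singleton x)

lemma key_subset1 [DecidableEq α] {A B : Fin 2 → Set α}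
    (hA : (A 0 \ A 1).ncard ≠ 1)
    (hPT : ∀ S : Finset α, IsPartialTransversal B S ↔ IsPartialTransversal A S)
    (hsub : ∀ i, A i ⊆ B i) : B 1 = A 1 := by
  refine Set.Subset.antisymm ?_ (hsub 1)
  intro x hxB
  by_contra hx1
  have hx0 : x ∈ A 0 := by
    have h1 : IsPartialTransversal B {x} :=
      (pt_iff B _).mpr (Or.inr (Or.inl ⟨x, rfl, Or.inr hxB⟩))
    rcases (pt_iff A _).mp ((hPT _).mp h1) with h | ⟨a, ha, hmem⟩ | ⟨a, b, hab, hS, _, _⟩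
    · simp at h
    · have hax : a = x := by
        have : x ∈ ({a} : Finset α) := ha ▸ Finset.mem_singleton_self x
        exact (Finset.mem_singleton.mp this).symm
      subst hax
      rcases hmem with h | h
      · exact h
      · exact absurd h hx1
    · have := congrArg Finset.card hS
      rw [Finset.card_singleton, Finset.card_pair hab] at this
      omega
  have hsub' : A 0 \ A 1 ⊆ {x} := by
    rintro t ⟨ht0, ht1⟩
    by_contra htx
    have htne : t ≠ x := fun h => htx (by simp [h])
    have hpt : IsPartialTransversal B {t, x} :=
      (pt_iff B _).mpr (Or.inr (Or.inr ⟨t, x, htne, rfl, hsub 0 ht0, hxB⟩))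
    rcases (pt_iff A _).mp ((hPT _).mp hpt) with h | ⟨a, ha, _⟩ | ⟨a, b, hab, hS, ha0, hb1⟩
    · exact Finset.insert_ne_empty _ _ h
    · have := congrArg Finset.card ha
      rw [Finset.card_pair htne, Finset.card_singleton] at this
      omega
    · have hbxt : b = t ∨ b = x := by
        have : b ∈ ({t, x} : Finset α) := by
          rw [hS]; exact Finset.mem_insert_of_mem (Finset.mem_singleton_self b)
        simpa using this
      rcases hbxt with rfl | rfl
      · exact ht1 hb1
      · exact hx1 hb1
  have hsing : A 0 \ A 1 = {x} :=
    Set.Subset.antisymm hsub' (Set.singleton_subset_iff.mpr ⟨hx0, hx1⟩)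
  exact hA (hsing ▸ Set.ncard_singleton x)

lemma exists_ext0 [DecidableEq α] (A : Fin 2 → Set α) (x : α) (h : A 1 \ A 0 = {x}) :
    ∃ B : Fin 2 → Set α,
      (∀ S : Finset α, IsPartialTransversal B S ↔ IsPartialTransversal A S) ∧
      (∀ i, A i ⊆ B i) ∧ B 0 ≠ A 0 := by
  have hx : x ∈ A 1 \ A 0 := by rw [h]; exact Set.mem_singleton x
  set B : Fin 2 → Set α := fun j => if j = 0 then A 0 ∪ {x} else A j with hBdef
  have hB0 : B 0 = A 0 ∪ {x} := by simp [hBdef]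
  have hB1 : B 1 = A 1 := by simp [hBdef]
  have hsub : ∀ i, A i ⊆ B i := by
    intro i
    rcases fin2_cases i with rfl | rfl
    · rw [hB0]; exact Set.subset_union_left
    · rw [hB1]
  refine ⟨B, ?_, hsub, ?_⟩
  · intro S
    constructor
    · intro hB
      rcases (pt_iff B S).mp hB with rfl | ⟨a, rfl, hmem⟩ | ⟨a, b, hab, rfl, ha, hb⟩
      · exact (pt_iff A _).mpr (Or.inl rfl)
      · rw [hB0, hB1] at hmem
        refine (pt_iff A _).mpr (Or.inr (Or.inl ⟨a, rfl, ?_⟩))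
        rcases hmem with (h0 | hax) | h1
        · exact Or.inl h0
        · rcases hax with rfl
          exact Or.inr hx.1
        · exact Or.inr h1
      · rw [hB0] at ha
        rw [hB1] at hb
        rcases ha with ha | hax
        · exact (pt_iff A _).mpr (Or.inr (Or.inr ⟨a, b, hab, rfl, ha, hb⟩))
        · rcases hax with rfl
          have hb0 : b ∈ A 0 := by
            by_contra hb0
            have : b ∈ A 1 \ A 0 := ⟨hb, hb0⟩
            rw [h] at this
            exact hab this.symm
          exact (pt_iff A _).mpr (Or.inr (Or.inr
            ⟨b, a, hab.symm, Finset.pair_comm a b, hb0, hx.1⟩))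
    · exact pt_mono hsub
  · intro heq
    have : x ∈ A 0 := by
      rw [← heq, hB0]; exact Set.mem_union_right _ (Set.mem_singleton x)
    exact hx.2 this

lemma exists_ext1 [DecidableEq α] (A : Fin 2 → Set α) (x : α) (h : A 0 \ A 1 = {x}) :
    ∃ B : Fin 2 → Set α,
      (∀ S : Finset α, IsPartialTransversal B S ↔ IsPartialTransversal A S) ∧
      (∀ i, A i ⊆ B i) ∧ B 1 ≠ A 1 := by
  have hx : x ∈ A 0 \ A 1 := by rw [h]; exact Set.mem_singleton x
  set B : Fin 2 → Set α := fun j => if j = 1 then A 1 ∪ {x} else A j with hBdef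
  have hB0 : B 0 = A 0 := by simp [hBdef]
  have hB1 : B 1 = A 1 ∪ {x} := by simp [hBdef]
  have hsub : ∀ i, A i ⊆ B i := by
    intro i
    rcases fin2_cases i with rfl | rfl
    · rw [hB0]
    · rw [hB1]; exact Set.subset_union_left
  refine ⟨B, ?_, hsub, ?_⟩
  · intro S
    constructor
    · intro hB
      rcases (pt_iff B S).mp hB with rfl | ⟨a, rfl, hmem⟩ | ⟨a, b, hab, rfl, ha, hb⟩
      · exact (pt_iff A _).mpr (Or.inl rfl)
      · rw [hB0, hB1] at hmem
        refine (pt_iff A _).mpr (Or.inr (Or.inl ⟨a, rfl, ?_⟩))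
        rcases hmem with h0 | (h1 | hax)
        · exact Or.inl h0
        · exact Or.inr h1
        · rcases hax with rfl
          exact Or.inl hx.1
      · rw [hB0] at ha
        rw [hB1] at hb
        rcases hb with hb | hbx
        · exact (pt_iff A _).mpr (Or.inr (Or.inr ⟨a, b, hab, rfl, ha, hb⟩))
        · rcases hbx with rfl
          have ha1 : a ∈ A 1 := by
            by_contra ha1
            have : a ∈ A 0 \ A 1 := ⟨ha, ha1⟩
            rw [h] at this
            exact hab this
          exact (pt_iff A _).mpr (Or.inr (Or.inr
            ⟨b, a, hab.symm, Finset.pair_comm a b, hx.1, ha1⟩))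
    · exact pt_mono hsub
  · intro heq
    have : x ∈ A 1 := by
      rw [← heq, hB1]; exact Set.mem_union_right _ (Set.mem_singleton x)
    exact hx.2 this

end Aux

/-- A binary `n × 2` matrix `X` encodes a maximal 2-presentation if and only if:
(1) there are distinct rows `i, i'` with `X i 0 = 1` and `X i' 1 = 1`;
(2) the number of rows with second entry `1` and first entry `0` is not `1`; and
(3) the number of rows with first entry `1` and second entry `0` is not `1`. -/
theorem maximal_two_presentation_iff
    (n : ℕ) (X : Matrix (Fin n) (Fin 2) ℝ)
    (hbin : ∀ i j, X i j = 0 ∨ X i j = 1) :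
    IsMaximalPresentation (fun j : Fin 2 => {i : Fin n | X i j = 1}) ↔
      ((∃ i i' : Fin n, i ≠ i' ∧ X i 0 = 1 ∧ X i' 1 = 1) ∧
        {i : Fin n | X i 1 = 1 ∧ X i 0 = 0}.ncard ≠ 1 ∧
        {i : Fin n | X i 0 = 1 ∧ X i 1 = 0}.ncard ≠ 1) := by
  set A : Fin 2 → Set (Fin n) := fun j => {i : Fin n | X i j = 1} with hA
  have hset : ∀ j k : Fin 2,
      {i : Fin n | X i j = 1 ∧ X i k = 0} = A j \ A k := by
    intro j k
    ext i
    simp only [hA, Set.mem_setOf_eq, Set.mem_diff]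
    constructor
    · rintro ⟨h1, h0⟩
      exact ⟨h1, by rw [h0]; norm_num⟩
    · rintro ⟨h1, h0⟩
      refine ⟨h1, ?_⟩
      rcases hbin i k with h | h
      · exact h
      · exact absurd h h0
  rw [hset 1 0, hset 0 1]
  constructor
  · rintro ⟨hrank, _, hmax⟩
    refine ⟨?_, ?_, ?_⟩
    · obtain ⟨a, b, hab, ha, hb⟩ := (rank_two_iff A).mp hrank
      exact ⟨a, b, hab, ha, hb⟩
    · intro hcard
      obtain ⟨x, hx⟩ := Set.ncard_eq_one.mp hcard
      obtain ⟨B, hPT, hsub, hne⟩ := exists_ext0 A x hx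
      exact hne (hmax B hPT hsub 0)
    · intro hcard
      obtain ⟨x, hx⟩ := Set.ncard_eq_one.mp hcard
      obtain ⟨B, hPT, hsub, hne⟩ := exists_ext1 A x hx
      exact hne (hmax B hPT hsub 1)
  · rintro ⟨⟨a, b, hab, ha, hb⟩, h2, h3⟩
    refine ⟨(rank_two_iff A).mpr ⟨a, b, hab, ha, hb⟩, fun S hS => pt_card_le A S hS, ?_⟩
    intro B hPT hsub i
    rcases fin2_cases i with rfl | rfl
    · exact key_subset0 h2 hPT hsub
    · exact key_subset1 h3 hPT hsub
end

section
/- Let X be an n × 2 matrix with entries in {0, 1} whose encoded family (A_1, A_2), A_j = {i : X_{ij} = 1}, is a maximal 2-presentation, and let k be an even positive integer. Then the (n + k) × 2 matrix obtained from X by appending k identical rows equal to (1, 0) encodes a maximal 2-presentation, and likewise the matrix obtained by appending k identical rows equal to (0, 1) encodes a maximal 2-presentation. -/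
theorem ipt_card_le {α : Type*} (A : Fin 2 → Set α) (S : Finset α)
    (h : IsPartialTransversal A S) : S.card ≤ 2 := by
  obtain ⟨f, hf, -⟩ := h
  have := Fintype.card_le_of_injective f hf
  simpa [Fintype.card_coe] using this

theorem ipt_empty {α ι : Type*} (A : ι → Set α) : IsPartialTransversal A (∅ : Finset α) :=
  ⟨fun s => (Finset.notMem_empty s.1 s.2).elim,
   fun a => (Finset.notMem_empty a.1 a.2).elim,
   fun a => (Finset.notMem_empty a.1 a.2).elim⟩

theorem ipt_mono {α ι : Type*} {A B : ι → Set α} (h : ∀ i, A i ⊆ B i) {S : Finset α}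
    (hS : IsPartialTransversal A S) : IsPartialTransversal B S := by
  obtain ⟨f, hf, hm⟩ := hS
  exact ⟨f, hf, fun s => h _ (hm s)⟩

theorem ipt_single {α ι : Type*} (A : ι → Set α) (s : α) :
    IsPartialTransversal A {s} ↔ ∃ j, s ∈ A j := by
  constructor
  · rintro ⟨f, hf, hmem⟩
    exact ⟨f ⟨s, by simp⟩, hmem _⟩
  · rintro ⟨j, hj⟩
    refine ⟨fun _ => j, ?_, ?_⟩
    · rintro ⟨a, ha⟩ ⟨b, hb⟩ -
      simp only [Finset.mem_singleton] at ha hb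
      exact Subtype.ext (ha.trans hb.symm)
    · rintro ⟨a, ha⟩
      simp only [Finset.mem_singleton] at ha
      subst ha
      exact hj

theorem ipt_pair_of {α : Type*} [DecidableEq α] (A : Fin 2 → Set α) {s t : α} (hst : s ≠ t)
    (h0 : s ∈ A 0) (h1 : t ∈ A 1) : IsPartialTransversal A {s, t} := by
  refine ⟨fun x => if (x : α) = s then 0 else 1, ?_, ?_⟩
  · rintro ⟨a, ha⟩ ⟨b, hb⟩ hab
    simp only [Finset.mem_insert, Finset.mem_singleton] at ha hb
    apply Subtype.ext
    dsimp at hab ⊢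
    split_ifs at hab with hA hB hC
    · rw [hA, hB]
    · exact absurd hab (by decide)
    · exact absurd hab (by decide)
    · rcases ha with rfl | rfl
      · exact absurd rfl hA
      · rcases hb with rfl | rfl
        · exact absurd rfl hC
        · rfl
  · rintro ⟨a, ha⟩
    simp only [Finset.mem_insert, Finset.mem_singleton] at ha
    dsimp
    split_ifs with h
    · rw [h]; exact h0
    · rcases ha with rfl | rfl
      · exact absurd rfl h
      · exact h1

theorem ipt_pair {α : Type*} [DecidableEq α] (A : Fin 2 → Set α) {s t : α} (hst : s ≠ t) :
    IsPartialTransversal A {s, t} ↔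
      (s ∈ A 0 ∧ t ∈ A 1) ∨ (s ∈ A 1 ∧ t ∈ A 0) := by
  constructor
  · rintro ⟨f, hf, hmem⟩
    have hs : s ∈ ({s, t} : Finset α) := by simp
    have ht : t ∈ ({s, t} : Finset α) := by simp
    have hne : f ⟨s, hs⟩ ≠ f ⟨t, ht⟩ := fun h => hst (congrArg Subtype.val (hf h))
    have h1 := hmem ⟨s, hs⟩
    have h2 := hmem ⟨t, ht⟩
    have hcases : (f ⟨s, hs⟩ = 0 ∧ f ⟨t, ht⟩ = 1) ∨ (f ⟨s, hs⟩ = 1 ∧ f ⟨t, ht⟩ = 0) := by omega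
    rcases hcases with ⟨e1, e2⟩ | ⟨e1, e2⟩
    · rw [e1] at h1; rw [e2] at h2; exact Or.inl ⟨h1, h2⟩
    · rw [e1] at h1; rw [e2] at h2; exact Or.inr ⟨h1, h2⟩
  · rintro (⟨h0, h1⟩ | ⟨h0, h1⟩)
    · exact ipt_pair_of A hst h0 h1
    · have := ipt_pair_of A hst.symm h1 h0
      rwa [Finset.pair_comm] at this

theorem ipt_pair_cd {α : Type*} [DecidableEq α] (A : Fin 2 → Set α) {s t : α} (hst : s ≠ t)
    {c d : Fin 2} (hcd : c ≠ d) :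
    IsPartialTransversal A {s, t} ↔ (s ∈ A c ∧ t ∈ A d) ∨ (s ∈ A d ∧ t ∈ A c) := by
  have hc : (c = 0 ∧ d = 1) ∨ (c = 1 ∧ d = 0) := by omega
  rw [ipt_pair A hst]
  rcases hc with ⟨rfl, rfl⟩ | ⟨rfl, rfl⟩ <;> tauto

theorem finset_trichotomy {α : Type*} [DecidableEq α] {S : Finset α} (h : S.card ≤ 2) :
    S = ∅ ∨ (∃ a, S = {a}) ∨ ∃ a b, a ≠ b ∧ S = {a, b} := by
  rcases Nat.lt_or_ge S.card 1 with h0 | h1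
  · exact Or.inl (Finset.card_eq_zero.mp (by omega))
  rcases Nat.lt_or_ge S.card 2 with h2 | h3
  · exact Or.inr (Or.inl (Finset.card_eq_one.mp (by omega)))
  · obtain ⟨a, b, hab, hS⟩ := Finset.card_eq_two.mp (le_antisymm h h3)
    exact Or.inr (Or.inr ⟨a, b, hab, hS⟩)

theorem fin_old_new {n k : ℕ} (x : Fin (n + k)) :
    (∃ i : Fin n, x = Fin.castAdd k i) ∨ ∃ i : Fin k, x = Fin.natAdd n i := by
  rcases Nat.lt_or_ge x.val n with h | h
  · exact Or.inl ⟨⟨x.val, h⟩, by simp [Fin.ext_iff]⟩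
  · exact Or.inr ⟨⟨x.val - n, by omega⟩, by simp [Fin.ext_iff]; omega⟩

theorem aux_append (n k : ℕ) (hk : 2 ≤ k) (A : Fin 2 → Set (Fin n))
    (hmax : IsMaximalPresentation A) (A' : Fin 2 → Set (Fin (n + k)))
    (c d : Fin 2) (hcd : c ≠ d)
    (htop : ∀ (i : Fin n) (j : Fin 2), Fin.castAdd k i ∈ A' j ↔ i ∈ A j)
    (hbotc : ∀ i : Fin k, Fin.natAdd n i ∈ A' c)
    (hbotd : ∀ i : Fin k, Fin.natAdd n i ∉ A' d) :
    IsMaximalPresentation A' := by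
  have old_ne_new : ∀ (i : Fin n) (i' : Fin k), Fin.castAdd k i ≠ Fin.natAdd n i' := by
    intro i i'
    simp [Fin.ext_iff]
    omega
  set q0 : Fin (n + k) := Fin.natAdd n ⟨0, by omega⟩ with hq0
  set q1 : Fin (n + k) := Fin.natAdd n ⟨1, by omega⟩ with hq1
  have hq01 : q0 ≠ q1 := by
    simp [hq0, hq1, Fin.ext_iff]
  refine ⟨?_, fun S h => ipt_card_le A' S h, ?_⟩
  · -- rank 2
    obtain ⟨B0, hB0t, hB0c⟩ := hmax.1
    obtain ⟨s, t, hst, rfl⟩ := Finset.card_eq_two.mp hB0c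
    rw [ipt_pair A hst] at hB0t
    have hAd : ∃ u, u ∈ A d := by
      have hd : d = 0 ∨ d = 1 := by omega
      rcases hB0t with ⟨h0, h1⟩ | ⟨h0, h1⟩ <;> rcases hd with rfl | rfl
      · exact ⟨s, h0⟩
      · exact ⟨t, h1⟩
      · exact ⟨t, h1⟩
      · exact ⟨s, h0⟩
    obtain ⟨u, hu⟩ := hAd
    have hne : q0 ≠ Fin.castAdd k u := (old_ne_new u _).symm
    refine ⟨{q0, Fin.castAdd k u}, ?_, Finset.card_pair hne⟩
    rw [ipt_pair_cd A' hne hcd]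
    exact Or.inl ⟨hbotc _, (htop u d).mpr hu⟩
  · -- maximality
    intro B hBiff hsub
    -- B d ⊆ A' d
    have hBd : ∀ y ∈ B d, y ∈ A' d := by
      intro y hy
      obtain ⟨q, hqy, hqc, hqd⟩ : ∃ q, q ≠ y ∧ q ∈ A' c ∧ q ∉ A' d := by
        by_cases h : y = q0
        · exact ⟨q1, by rw [h]; exact hq01.symm, hbotc _, hbotd _⟩
        · exact ⟨q0, fun hh => h hh.symm, hbotc _, hbotd _⟩
      have hT : IsPartialTransversal B {y, q} :=
        (ipt_pair_cd B (Ne.symm hqy) hcd).mpr (Or.inr ⟨hy, hsub c hqc⟩)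
      have := (hBiff _).mp hT
      rw [ipt_pair_cd A' (Ne.symm hqy) hcd] at this
      rcases this with ⟨h1, h2⟩ | ⟨h1, h2⟩
      · exact absurd h2 hqd
      · exact h1
    -- restricted family
    set B' : Fin 2 → Set (Fin n) := fun j => {i | Fin.castAdd k i ∈ B j} with hB'
    have hsub' : ∀ j, A j ⊆ B' j := fun j i hi => hsub j ((htop i j).mpr hi)
    have hsame : ∀ S : Finset (Fin n), IsPartialTransversal B' S ↔ IsPartialTransversal A S := by
      intro S
      constructor
      · intro hS
        rcases finset_trichotomy (ipt_card_le B' S hS) with rfl | ⟨a, rfl⟩ | ⟨a, b, hab, rfl⟩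
        · exact ipt_empty A
        · rw [ipt_single] at hS ⊢
          obtain ⟨j, hj⟩ := hS
          have h1 : IsPartialTransversal B {Fin.castAdd k a} := (ipt_single B _).mpr ⟨j, hj⟩
          obtain ⟨j', hj'⟩ := (ipt_single A' _).mp ((hBiff _).mp h1)
          exact ⟨j', (htop a j').mp hj'⟩
        · have hab' : Fin.castAdd k a ≠ Fin.castAdd k b :=
            fun h => hab (Fin.castAdd_injective n k h)
          rw [ipt_pair B' hab] at hS
          have hT : IsPartialTransversal B {Fin.castAdd k a, Fin.castAdd k b} := by
            rw [ipt_pair B hab']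
            exact hS
          have := (hBiff _).mp hT
          rw [ipt_pair A' hab'] at this
          rw [ipt_pair A hab]
          rcases this with ⟨h1, h2⟩ | ⟨h1, h2⟩
          · exact Or.inl ⟨(htop a 0).mp h1, (htop b 1).mp h2⟩
          · exact Or.inr ⟨(htop a 1).mp h1, (htop b 0).mp h2⟩
      · exact ipt_mono hsub'
    have hB'eq := hmax.2.2 B' hsame hsub'
    -- B c ⊆ A' c
    have hBc : ∀ x ∈ B c, x ∈ A' c := by
      intro x hx
      obtain ⟨j, hj⟩ := (ipt_single A' x).mp ((hBiff _).mp ((ipt_single B x).mpr ⟨c, hx⟩))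
      have hj2 : j = c ∨ j = d := by omega
      rcases hj2 with rfl | rfl
      · exact hj
      · rcases fin_old_new x with ⟨i, rfl⟩ | ⟨i, rfl⟩
        · have : i ∈ B' c := hx
          rw [hB'eq c] at this
          exact (htop i c).mpr this
        · exact absurd hj (hbotd i)
    intro i
    have hi : i = c ∨ i = d := by omega
    rcases hi with rfl | rfl
    · exact Set.Subset.antisymm hBc (hsub i)
    · exact Set.Subset.antisymm hBd (hsub i)

/-- If a binary `n × 2` matrix `X` encodes a maximal 2-presentation and `k` is an even
positive integer, then the `(n + k) × 2` matrix `Y` obtained from `X` by appending `k`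
identical rows equal to `(1, 0)` encodes a maximal 2-presentation, and likewise the matrix
`Z` obtained by appending `k` identical rows equal to `(0, 1)` encodes a maximal
2-presentation. -/
theorem maximal_two_presentation_append_parallel_rows
    (n k : ℕ) (hk : 1 ≤ k) (hke : Even k)
    (X : Matrix (Fin n) (Fin 2) ℝ)
    (hbin : ∀ i j, X i j = 0 ∨ X i j = 1)
    (hmax : IsMaximalPresentation (fun j : Fin 2 => {i : Fin n | X i j = 1}))
    (Y Z : Matrix (Fin (n + k)) (Fin 2) ℝ)
    (hYtop : ∀ (i : Fin n) (j : Fin 2), Y (Fin.castAdd k i) j = X i j)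
    (hYbot : ∀ i : Fin k, Y (Fin.natAdd n i) 0 = 1 ∧ Y (Fin.natAdd n i) 1 = 0)
    (hZtop : ∀ (i : Fin n) (j : Fin 2), Z (Fin.castAdd k i) j = X i j)
    (hZbot : ∀ i : Fin k, Z (Fin.natAdd n i) 0 = 0 ∧ Z (Fin.natAdd n i) 1 = 1) :
    IsMaximalPresentation (fun j : Fin 2 => {i : Fin (n + k) | Y i j = 1}) ∧
      IsMaximalPresentation (fun j : Fin 2 => {i : Fin (n + k) | Z i j = 1}) := by
  have hk2 : 2 ≤ k := by rcases hke with ⟨m, rfl⟩; omega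
  constructor
  · refine aux_append n k hk2 _ hmax _ 0 1 (by decide) ?_ ?_ ?_
    · intro i j
      simp only [Set.mem_setOf_eq, hYtop]
    · intro i
      simp only [Set.mem_setOf_eq, (hYbot i).1]
    · intro i
      simp only [Set.mem_setOf_eq, (hYbot i).2]
      exact zero_ne_one
  · refine aux_append n k hk2 _ hmax _ 1 0 (by decide) ?_ ?_ ?_
    · intro i j
      simp only [Set.mem_setOf_eq, hZtop]
    · intro i
      simp only [Set.mem_setOf_eq, (hZbot i).2]
    · intro i
      simp only [Set.mem_setOf_eq, (hZbot i).1]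
      exact zero_ne_one
end
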